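/- arXiv:1911.05096 — 8 statements merged into one kernel-verified Lean document; each statement's English description precedes it below -/
import Mathlib

section
/- Let X₁,…,Xₙ be independent two-point random variables with Xᵢ ∈ {0, bᵢ}, P(Xᵢ = bᵢ) = pᵢ, bᵢ ≥ 0. If the ordering σ satisfies b_{σ(1)} ≥ b_{σ(2)} ≥ ⋯ ≥ b_{σ(n)}, then the optimal stopping value V_σ equals E[max(X₁,…,Xₙ, 0)], the prophet's expected reward; in particular such an ordering is optimal among all orderings. -/
open MeasureTheory ProbabilityTheory

/-- The optimal stopping value of a sequence of random variables, defined by the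
backward recursion `V(X₁,…,Xₙ) = E[max(X₁, V(X₂,…,Xₙ))]`, `V() = 0`. -/
noncomputable def stopVal {Ω : Type*} [MeasurableSpace Ω] (μ : Measure Ω) :
    List (Ω → ℝ) → ℝ
  | [] => 0
  | X :: rest => ∫ ω, max (X ω) (stopVal μ rest) ∂μ

section Aux

variable {Ω : Type*} [MeasurableSpace Ω] {n : ℕ}

/-- pointwise max over a list of indexed variables, with floor 0. -/
noncomputable def vsup {α : Type*} (v : α → ℝ) : List α → ℝ
  | [] => 0
  | a :: L => max (v a) (vsup v L)

lemma vsup_nonneg {α : Type*} (v : α → ℝ) (L : List α) : 0 ≤ vsup v L := by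
  induction L with
  | nil => simp [vsup]
  | cons a L ih => exact le_trans ih (le_max_right _ _)

lemma vsup_le {α : Type*} {v : α → ℝ} {L : List α} {c : ℝ} (hc : 0 ≤ c)
    (h : ∀ a ∈ L, v a ≤ c) : vsup v L ≤ c := by
  induction L with
  | nil => simpa [vsup]
  | cons a L ih =>
    exact max_le (h a (by simp)) (ih fun a ha => h a (by simp [ha]))

lemma le_vsup {α : Type*} {v : α → ℝ} {L : List α} {a : α} (ha : a ∈ L) : v a ≤ vsup v L := by
  induction L with
  | nil => simp at ha
  | cons x L ih =>
    rcases List.mem_cons.mp ha with h | h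
    · subst h; exact le_max_left _ _
    · exact le_trans (ih h) (le_max_right _ _)

lemma vsup_map {α β : Type*} (v : β → ℝ) (f : α → β) (L : List α) :
    vsup v (L.map f) = vsup (v ∘ f) L := by
  induction L with
  | nil => rfl
  | cons a L ih => simp [vsup, ih]

lemma vsup_measurable {α δ : Type*} [MeasurableSpace δ] (g : α → δ → ℝ)
    (hg : ∀ a, Measurable (g a)) (L : List α) :
    Measurable fun d => vsup (fun a => g a d) L := by
  induction L with
  | nil => simpa [vsup] using measurable_const
  | cons a L ih => exact (hg a).max ih

lemma integrable_of_bound (μ : Measure Ω) [IsFiniteMeasure μ] {f : Ω → ℝ}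
    (hf : Measurable f) (C : ℝ) (h : ∀ ω, |f ω| ≤ C) : Integrable f μ :=
  (integrable_const C).mono' hf.aestronglyMeasurable (ae_of_all _ fun ω => by simpa using h ω)

/-- independence of one variable from the max over a disjoint list -/
lemma indep_vsup (μ : Measure Ω) {X : Fin (n + 1) → Ω → ℝ}
    (hmeas : ∀ i, Measurable (X i))
    (hindep : iIndepFun X μ)
    {i : Fin (n + 1)} {l : List (Fin (n + 1))} (hi : i ∉ l) :
    IndepFun (X i) (fun ω => vsup (fun j => X j ω) l) μ := by
  classical
  have hdis : Disjoint ({i} : Finset (Fin (n + 1))) l.toFinset := by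
    simp only [Finset.disjoint_left, Finset.mem_singleton]
    rintro a rfl ha
    exact hi (List.mem_toFinset.mp ha)
  have h := hindep.indepFun_finset {i} l.toFinset hdis hmeas
  set G : (({i} : Finset (Fin (n + 1))) → ℝ) → ℝ := fun v => v ⟨i, by simp⟩ with hG
  set F : ({x // x ∈ l.toFinset} → ℝ) → ℝ :=
    fun v => vsup (fun j : {x // x ∈ l} => v ⟨j.1, List.mem_toFinset.mpr j.2⟩) l.attach with hF
  have hGm : Measurable G := measurable_pi_apply _
  have hFm : Measurable F :=
    vsup_measurable (fun (j : {x // x ∈ l}) (v : {x // x ∈ l.toFinset} → ℝ) =>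
      v ⟨j.1, List.mem_toFinset.mpr j.2⟩) (fun a => measurable_pi_apply _) l.attach
  have h2 := h.comp hGm hFm
  have e1 : (G ∘ fun ω (j : ({i} : Finset (Fin (n + 1)))) => X (↑j) ω) = X i := rfl
  have e2 : (F ∘ fun ω (j : {x // x ∈ l.toFinset}) => X (↑j) ω)
      = fun ω => vsup (fun j => X j ω) l := by
    funext ω
    show vsup (fun j : {x // x ∈ l} => X j.1 ω) l.attach = vsup (fun j => X j ω) l
    have := vsup_map (fun j => X j ω) (Subtype.val : {x // x ∈ l} → Fin (n + 1)) l.attach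
    rw [List.attach_map_subtype_val] at this
    exact this.symm
  rwa [e1, e2] at h2

end Aux

section Core

variable {Ω : Type*} [MeasurableSpace Ω] {n : ℕ}
variable (μ : Measure Ω) [IsProbabilityMeasure μ]
variable {X : Fin (n + 1) → Ω → ℝ} {b : Fin (n + 1) → ℝ}

lemma X_le_b (hb : ∀ i, 0 ≤ b i) (hval : ∀ i ω, X i ω = 0 ∨ X i ω = b i) (i : Fin (n + 1))
    (ω : Ω) : X i ω ≤ b i := by
  rcases hval i ω with h | h <;> simp [h, hb i]

lemma X_nonneg (hb : ∀ i, 0 ≤ b i) (hval : ∀ i ω, X i ω = 0 ∨ X i ω = b i) (i : Fin (n + 1))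
    (ω : Ω) : 0 ≤ X i ω := by
  rcases hval i ω with h | h <;> simp [h, hb i]

lemma measurable_phi (i : Fin (n + 1)) :
    Measurable (fun x : ℝ => if x = b i then (1 : ℝ) else 0) :=
  Measurable.ite (measurableSet_eq) measurable_const measurable_const

lemma indicator_eq (i : Fin (n + 1)) :
    (fun ω => if X i ω = b i then (1 : ℝ) else 0)
      = Set.indicator {ω | X i ω = b i} (fun _ => (1 : ℝ)) := by
  funext ω
  simp [Set.indicator_apply, Set.mem_setOf_eq]

lemma integrable_I (hmeas : ∀ i, Measurable (X i)) (i : Fin (n + 1)) :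
    Integrable (fun ω => if X i ω = b i then (1 : ℝ) else 0) μ := by
  rw [indicator_eq (X := X) i]
  exact (integrable_const (1 : ℝ)).indicator ((hmeas i) (measurableSet_singleton _))

lemma integral_I (hmeas : ∀ i, Measurable (X i)) (i : Fin (n + 1)) :
    ∫ ω, (if X i ω = b i then (1 : ℝ) else 0) ∂μ = (μ {ω | X i ω = b i}).toReal := by
  have hA : MeasurableSet {ω | X i ω = b i} := (hmeas i) (measurableSet_singleton _)
  rw [indicator_eq (X := X) i]
  exact integral_indicator_one hA

/-- factorization of the integral of indicator times a function of the tail max -/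
lemma key_factor (hmeas : ∀ i, Measurable (X i))
    (hindep : iIndepFun X μ)
    {i : Fin (n + 1)} {l : List (Fin (n + 1))} (hi : i ∉ l)
    (g : ℝ → ℝ) (hg : Measurable g) :
    ∫ ω, (if X i ω = b i then (1 : ℝ) else 0) * g (vsup (fun j => X j ω) l) ∂μ
      = (μ {ω | X i ω = b i}).toReal * ∫ ω, g (vsup (fun j => X j ω) l) ∂μ := by
  have hMm : Measurable (fun ω => vsup (fun j => X j ω) l) :=
    vsup_measurable (fun j => X j) hmeas l
  have hInd := (indep_vsup μ hmeas hindep hi).comp (measurable_phi (b := b) i) hg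
  have h := IndepFun.integral_mul_eq_mul_integral hInd (((measurable_phi (b := b) i).comp (hmeas i)).aestronglyMeasurable)
    ((hg.comp hMm).aestronglyMeasurable)
  have h2 : ∫ ω, (if X i ω = b i then (1 : ℝ) else 0) * g (vsup (fun j => X j ω) l) ∂μ
      = (∫ ω, (if X i ω = b i then (1 : ℝ) else 0) ∂μ)
          * ∫ ω, g (vsup (fun j => X j ω) l) ∂μ := h
  rw [h2, integral_I μ hmeas i]

lemma integral_max_const (hmeas : ∀ i, Measurable (X i)) (hb : ∀ i, 0 ≤ b i)
    (hval : ∀ i ω, X i ω = 0 ∨ X i ω = b i) (i : Fin (n + 1)) {V : ℝ} (hV : 0 ≤ V) :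
    ∫ ω, max (X i ω) V ∂μ
      = (μ {ω | X i ω = b i}).toReal * (max (b i) V - V) + V := by
  have hpt : ∀ ω, max (X i ω) V
      = (if X i ω = b i then (1 : ℝ) else 0) * (max (b i) V - V) + V := by
    intro ω
    by_cases hbe : X i ω = b i
    · simp [hbe]
    · have hx0 : X i ω = 0 := (hval i ω).resolve_right hbe
      rw [if_neg hbe, hx0, zero_mul, zero_add, max_eq_right hV]
  have hInt : Integrable (fun ω => (if X i ω = b i then (1 : ℝ) else 0) * (max (b i) V - V)) μ :=
    (integrable_I μ hmeas i).mul_const _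
  calc ∫ ω, max (X i ω) V ∂μ
      = ∫ ω, ((if X i ω = b i then (1 : ℝ) else 0) * (max (b i) V - V) + V) ∂μ :=
        integral_congr_ae (ae_of_all _ hpt)
    _ = (∫ ω, (if X i ω = b i then (1 : ℝ) else 0) * (max (b i) V - V) ∂μ)
          + ∫ _, V ∂μ := integral_add hInt (integrable_const V)
    _ = (μ {ω | X i ω = b i}).toReal * (max (b i) V - V) + V := by
        rw [integral_mul_const, integral_I μ hmeas i, integral_const]
        simp

lemma integral_max_tail (hmeas : ∀ i, Measurable (X i))
    (hindep : iIndepFun X μ)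
    (hb : ∀ i, 0 ≤ b i) (hval : ∀ i ω, X i ω = 0 ∨ X i ω = b i)
    {i : Fin (n + 1)} {l : List (Fin (n + 1))} (hi : i ∉ l) :
    ∫ ω, max (X i ω) (vsup (fun j => X j ω) l) ∂μ
      = (μ {ω | X i ω = b i}).toReal
          * ((∫ ω, max (b i) (vsup (fun j => X j ω) l) ∂μ)
              - ∫ ω, vsup (fun j => X j ω) l ∂μ)
        + ∫ ω, vsup (fun j => X j ω) l ∂μ := by
  set M : Ω → ℝ := fun ω => vsup (fun j => X j ω) l with hM
  have hMm : Measurable M := vsup_measurable (fun j => X j) hmeas l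
  have hM0 : ∀ ω, 0 ≤ M ω := fun ω => vsup_nonneg _ _
  have hMB : ∀ ω, M ω ≤ vsup b l := fun ω =>
    vsup_le (vsup_nonneg _ _) (fun j hj => le_trans (X_le_b hb hval j ω) (le_vsup hj))
  have hMint : Integrable M μ := integrable_of_bound μ hMm (vsup b l)
    (fun ω => by rw [abs_of_nonneg (hM0 ω)]; exact hMB ω)
  set g : ℝ → ℝ := fun x => max (b i) x - x with hg
  have hgm : Measurable g := (measurable_const.max measurable_id).sub measurable_id
  have hgb : ∀ x, 0 ≤ x → 0 ≤ g x ∧ g x ≤ b i := by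
    intro x hx
    constructor
    · simp [hg, le_max_right]
    · simp only [hg]
      rcases le_total (b i) x with h | h
      · simp [max_eq_right h, hb i]
      · simp [max_eq_left h, hx]
  have hpt : ∀ ω, max (X i ω) (M ω)
      = (if X i ω = b i then (1 : ℝ) else 0) * g (M ω) + M ω := by
    intro ω
    by_cases hbe : X i ω = b i
    · simp [hbe, hg]
    · have hx0 : X i ω = 0 := (hval i ω).resolve_right hbe
      rw [if_neg hbe, hx0, zero_mul, zero_add, max_eq_right (hM0 ω)]
  have hIgm : Measurable fun ω => (if X i ω = b i then (1 : ℝ) else 0) * g (M ω) :=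
    ((measurable_phi (b := b) i).comp (hmeas i)).mul (hgm.comp hMm)
  have hIgint : Integrable (fun ω => (if X i ω = b i then (1 : ℝ) else 0) * g (M ω)) μ := by
    refine integrable_of_bound μ hIgm (b i) (fun ω => ?_)
    rw [abs_mul]
    rcases hgb (M ω) (hM0 ω) with ⟨h1, h2⟩
    by_cases hbe : X i ω = b i <;>
      simp [hbe, abs_of_nonneg h1, h2, hb i]
  have hmaxint : Integrable (fun ω => max (b i) (M ω)) μ := by
    refine integrable_of_bound μ (measurable_const.max hMm) (max (b i) (vsup b l)) (fun ω => ?_)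
    rw [abs_of_nonneg (le_trans (hb i) (le_max_left _ _))]
    exact max_le (le_max_left _ _) (le_trans (hMB ω) (le_max_right _ _))
  calc ∫ ω, max (X i ω) (M ω) ∂μ
      = ∫ ω, ((if X i ω = b i then (1 : ℝ) else 0) * g (M ω) + M ω) ∂μ :=
        integral_congr_ae (ae_of_all _ hpt)
    _ = (∫ ω, (if X i ω = b i then (1 : ℝ) else 0) * g (M ω) ∂μ) + ∫ ω, M ω ∂μ :=
        integral_add hIgint hMint
    _ = (μ {ω | X i ω = b i}).toReal * (∫ ω, g (M ω) ∂μ) + ∫ ω, M ω ∂μ := by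
        rw [key_factor μ hmeas hindep hi g hgm]
    _ = (μ {ω | X i ω = b i}).toReal
          * ((∫ ω, max (b i) (M ω) ∂μ) - ∫ ω, M ω ∂μ) + ∫ ω, M ω ∂μ := by
        rw [show (∫ ω, g (M ω) ∂μ) = (∫ ω, max (b i) (M ω) ∂μ) - ∫ ω, M ω ∂μ from
          integral_sub hmaxint hMint]

end Core

section Main

variable {Ω : Type*} [MeasurableSpace Ω] {n : ℕ}
variable (μ : Measure Ω) [IsProbabilityMeasure μ]
variable {X : Fin (n + 1) → Ω → ℝ} {b : Fin (n + 1) → ℝ}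

lemma q_nonneg (i : Fin (n + 1)) : 0 ≤ (μ {ω | X i ω = b i}).toReal := ENNReal.toReal_nonneg

lemma q_le_one (i : Fin (n + 1)) : (μ {ω | X i ω = b i}).toReal ≤ 1 := by
  have h : μ {ω | X i ω = b i} ≤ 1 := prob_le_one
  calc (μ {ω | X i ω = b i}).toReal ≤ (1 : ENNReal).toReal :=
        ENNReal.toReal_mono ENNReal.one_ne_top h
    _ = 1 := by simp

lemma stopVal_sorted (hmeas : ∀ i, Measurable (X i))
    (hindep : iIndepFun X μ)
    (hb : ∀ i, 0 ≤ b i) (hval : ∀ i ω, X i ω = 0 ∨ X i ω = b i)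
    (l : List (Fin (n + 1))) (hnd : l.Nodup)
    (hpw : l.Pairwise fun a c => b c ≤ b a) :
    stopVal μ (l.map X) = ∫ ω, vsup (fun j => X j ω) l ∂μ := by
  induction l with
  | nil => simp [stopVal, vsup]
  | cons i l ih =>
    have hi : i ∉ l := (List.nodup_cons.mp hnd).1
    have hnd' := (List.nodup_cons.mp hnd).2
    obtain ⟨hle, hpw'⟩ := List.pairwise_cons.mp hpw
    have hM0 : ∀ ω, 0 ≤ vsup (fun j => X j ω) l := fun ω => vsup_nonneg _ _
    have hMm : Measurable fun ω => vsup (fun j => X j ω) l :=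
      vsup_measurable (fun j => X j) hmeas l
    have hMbi : ∀ ω, vsup (fun j => X j ω) l ≤ b i := fun ω =>
      vsup_le (hb i) (fun j hj => le_trans (X_le_b hb hval j ω) (hle j hj))
    have hMint : Integrable (fun ω => vsup (fun j => X j ω) l) μ :=
      integrable_of_bound μ hMm (b i) (fun ω => by
        rw [abs_of_nonneg (hM0 ω)]; exact hMbi ω)
    have hm0 : 0 ≤ ∫ ω, vsup (fun j => X j ω) l ∂μ := integral_nonneg hM0
    have hmbi : (∫ ω, vsup (fun j => X j ω) l ∂μ) ≤ b i := by
      calc (∫ ω, vsup (fun j => X j ω) l ∂μ) ≤ ∫ _, b i ∂μ :=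
            integral_mono hMint (integrable_const _) hMbi
        _ = b i := by simp
    have lhs : stopVal μ ((i :: l).map X)
        = (μ {ω | X i ω = b i}).toReal
            * (max (b i) (∫ ω, vsup (fun j => X j ω) l ∂μ) - ∫ ω, vsup (fun j => X j ω) l ∂μ)
          + ∫ ω, vsup (fun j => X j ω) l ∂μ := by
      show (∫ ω, max (X i ω) (stopVal μ (l.map X)) ∂μ) = _
      rw [ih hnd' hpw']
      exact integral_max_const μ hmeas hb hval i hm0
    have rhs : ∫ ω, vsup (fun j => X j ω) (i :: l) ∂μ
        = (μ {ω | X i ω = b i}).toReal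
            * ((∫ ω, max (b i) (vsup (fun j => X j ω) l) ∂μ) - ∫ ω, vsup (fun j => X j ω) l ∂μ)
          + ∫ ω, vsup (fun j => X j ω) l ∂μ := by
      have : ∫ ω, vsup (fun j => X j ω) (i :: l) ∂μ
          = ∫ ω, max (X i ω) (vsup (fun j => X j ω) l) ∂μ := rfl
      rw [this]
      exact integral_max_tail μ hmeas hindep hb hval hi
    rw [lhs, rhs]
    have e1 : (∫ ω, max (b i) (vsup (fun j => X j ω) l) ∂μ) = b i := by
      have : ∀ ω, max (b i) (vsup (fun j => X j ω) l) = b i := fun ω => max_eq_left (hMbi ω)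
      rw [integral_congr_ae (ae_of_all _ this)]
      simp
    rw [e1, max_eq_left hmbi]

lemma stopVal_le (hmeas : ∀ i, Measurable (X i))
    (hindep : iIndepFun X μ)
    (hb : ∀ i, 0 ≤ b i) (hval : ∀ i ω, X i ω = 0 ∨ X i ω = b i)
    (l : List (Fin (n + 1))) (hnd : l.Nodup) :
    0 ≤ stopVal μ (l.map X) ∧
      stopVal μ (l.map X) ≤ ∫ ω, vsup (fun j => X j ω) l ∂μ := by
  induction l with
  | nil => simp [stopVal, vsup]
  | cons i l ih =>
    have hi : i ∉ l := (List.nodup_cons.mp hnd).1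
    have hnd' := (List.nodup_cons.mp hnd).2
    obtain ⟨hV0, hVle⟩ := ih hnd'
    have hM0 : ∀ ω, 0 ≤ vsup (fun j => X j ω) l := fun ω => vsup_nonneg _ _
    have hMm : Measurable fun ω => vsup (fun j => X j ω) l :=
      vsup_measurable (fun j => X j) hmeas l
    have hMB : ∀ ω, vsup (fun j => X j ω) l ≤ vsup b l := fun ω =>
      vsup_le (vsup_nonneg _ _) (fun j hj => le_trans (X_le_b hb hval j ω) (le_vsup hj))
    have hMint : Integrable (fun ω => vsup (fun j => X j ω) l) μ :=
      integrable_of_bound μ hMm (vsup b l) (fun ω => by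
        rw [abs_of_nonneg (hM0 ω)]; exact hMB ω)
    have hmaxint : Integrable (fun ω => max (b i) (vsup (fun j => X j ω) l)) μ := by
      refine integrable_of_bound μ (measurable_const.max hMm) (max (b i) (vsup b l)) (fun ω => ?_)
      rw [abs_of_nonneg (le_trans (hb i) (le_max_left _ _))]
      exact max_le (le_max_left _ _) (le_trans (hMB ω) (le_max_right _ _))
    set q := (μ {ω | X i ω = b i}).toReal with hq
    set V := stopVal μ (l.map X) with hV
    set m := ∫ ω, vsup (fun j => X j ω) l ∂μ with hm
    have lhs : stopVal μ ((i :: l).map X) = q * (max (b i) V - V) + V := by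
      show (∫ ω, max (X i ω) V ∂μ) = _
      exact integral_max_const μ hmeas hb hval i hV0
    have rhs : ∫ ω, vsup (fun j => X j ω) (i :: l) ∂μ
        = q * ((∫ ω, max (b i) (vsup (fun j => X j ω) l) ∂μ) - m) + m := by
      have : ∫ ω, vsup (fun j => X j ω) (i :: l) ∂μ
          = ∫ ω, max (X i ω) (vsup (fun j => X j ω) l) ∂μ := rfl
      rw [this]
      exact integral_max_tail μ hmeas hindep hb hval hi
    have hq0 : 0 ≤ q := q_nonneg μ i
    have hq1 : q ≤ 1 := q_le_one μ i
    have hIb : b i ≤ ∫ ω, max (b i) (vsup (fun j => X j ω) l) ∂μ := by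
      calc b i = ∫ _, b i ∂μ := by simp
        _ ≤ _ := integral_mono (integrable_const _) hmaxint (fun ω => le_max_left _ _)
    have hIm : m ≤ ∫ ω, max (b i) (vsup (fun j => X j ω) l) ∂μ :=
      integral_mono hMint hmaxint (fun ω => le_max_right _ _)
    constructor
    · rw [lhs]
      have : V ≤ max (b i) V := le_max_right _ _
      nlinarith
    · rw [lhs, rhs]
      have h1 : max (b i) V ≤ ∫ ω, max (b i) (vsup (fun j => X j ω) l) ∂μ :=
        max_le hIb (le_trans hVle hIm)
      have h2 : V ≤ m := hVle
      nlinarith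

end Main

theorem stmt7 {Ω : Type*} [MeasurableSpace Ω] (μ : Measure Ω) [IsProbabilityMeasure μ]
    (n : ℕ) (X : Fin (n + 1) → Ω → ℝ) (b p : Fin (n + 1) → ℝ)
    (hmeas : ∀ i, Measurable (X i))
    (hindep : iIndepFun X μ)
    (hb : ∀ i, 0 ≤ b i)
    (hval : ∀ i ω, X i ω = 0 ∨ X i ω = b i)
    (hP : ∀ i, μ {ω | X i ω = b i} = ENNReal.ofReal (p i))
    (σ : Equiv.Perm (Fin (n + 1)))
    (hσ : ∀ k l : Fin (n + 1), k ≤ l → b (σ l) ≤ b (σ k)) :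
    stopVal μ (List.ofFn fun k => X (σ k)) =
        ∫ ω, Finset.univ.sup' Finset.univ_nonempty (fun i => X i ω) ∂μ ∧
      ∀ τ : Equiv.Perm (Fin (n + 1)),
        stopVal μ (List.ofFn fun k => X (τ k)) ≤ stopVal μ (List.ofFn fun k => X (σ k)) := by
  have hsup : ∀ (l : List (Fin (n + 1))), (∀ j, j ∈ l) → ∀ ω,
      vsup (fun j => X j ω) l = Finset.univ.sup' Finset.univ_nonempty (fun i => X i ω) := by
    intro l hl ω
    apply le_antisymm
    · refine vsup_le ?_ (fun j _ => Finset.le_sup' (f := fun i => X i ω) (Finset.mem_univ j))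
      exact le_trans (X_nonneg hb hval 0 ω) (Finset.le_sup' (f := fun i => X i ω) (Finset.mem_univ (0 : Fin (n + 1))))
    · exact Finset.sup'_le _ _ (fun j _ => le_vsup (v := fun j => X j ω) (hl j))
  have hlist : ∀ τ : Equiv.Perm (Fin (n + 1)),
      (List.ofFn fun k => X (τ k)) = (List.ofFn fun k => τ k).map X :=
    fun τ => List.map_ofFn.symm
  have hnd : ∀ τ : Equiv.Perm (Fin (n + 1)), (List.ofFn fun k => τ k).Nodup :=
    fun τ => List.nodup_ofFn.mpr τ.injective
  have hmem : ∀ (τ : Equiv.Perm (Fin (n + 1))) (j : Fin (n + 1)),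
      j ∈ (List.ofFn fun k => τ k) := by
    intro τ j
    rw [List.mem_ofFn]
    exact ⟨τ.symm j, by simp⟩
  have hσeq : stopVal μ (List.ofFn fun k => X (σ k))
      = ∫ ω, Finset.univ.sup' Finset.univ_nonempty (fun i => X i ω) ∂μ := by
    rw [hlist σ, stopVal_sorted μ hmeas hindep hb hval _ (hnd σ)
      (List.pairwise_ofFn.mpr (fun k l h => hσ k l (le_of_lt h)))]
    exact integral_congr_ae (ae_of_all _ fun ω => hsup _ (hmem σ) ω)
  refine ⟨hσeq, fun τ => ?_⟩
  rw [hσeq, hlist τ]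
  calc stopVal μ ((List.ofFn fun k => τ k).map X)
      ≤ ∫ ω, vsup (fun j => X j ω) (List.ofFn fun k => τ k) ∂μ :=
        (stopVal_le μ hmeas hindep hb hval _ (hnd τ)).2
    _ = ∫ ω, Finset.univ.sup' Finset.univ_nonempty (fun i => X i ω) ∂μ :=
        integral_congr_ae (ae_of_all _ fun ω => hsup _ (hmem τ) ω)
end

section
/- Let X₁,…,Xₙ be independent two-point random variables supported on {0, bᵢ} with 0 < pᵢ < 1 and bᵢ > 0 for all i. If an ordering σ has b_{σ(j)} < b_{σ(j+1)} for some j, then the optimal stopping value V_σ is strictly less than E[max(X₁,…,Xₙ)]. -/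
set_option linter.unusedSectionVars false
set_option linter.unusedVariables false
set_option linter.unnecessarySimpa false


open MeasureTheory ProbabilityTheory

namespace Stmt8Aux

variable {Ω : Type*} [MeasurableSpace Ω] {μ : Measure Ω} [IsProbabilityMeasure μ]
  {n : ℕ} {X : Fin (n + 1) → Ω → ℝ} {b p : Fin (n + 1) → ℝ}

/-- running max of a finite list of the random variables, starting from 0 -/
noncomputable def mx (X : Fin (n + 1) → Ω → ℝ) (l : List (Fin (n + 1))) (ω : Ω) : ℝ :=
  (l.map fun i => X i ω).foldr max 0

lemma mx_nil (ω : Ω) : mx X List.nil ω = 0 := rfl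

lemma mx_cons (i : Fin (n + 1)) (l : List (Fin (n + 1))) (ω : Ω) :
    mx X (i :: l) ω = max (X i ω) (mx X l ω) := rfl

lemma mx_nonneg (l : List (Fin (n + 1))) (ω : Ω) : 0 ≤ mx X l ω := by
  induction l with
  | nil => exact le_refl 0
  | cons a l ih => exact le_trans ih (le_max_right _ _)

lemma le_mx {l : List (Fin (n + 1))} {i : Fin (n + 1)} (hi : i ∈ l) (ω : Ω) :
    X i ω ≤ mx X l ω := by
  induction l with
  | nil => simp at hi
  | cons a l ih =>
    rcases List.mem_cons.mp hi with h | h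
    · subst h; exact le_max_left _ _
    · exact le_trans (ih h) (le_max_right _ _)

lemma mx_le {l : List (Fin (n + 1))} {c : ℝ} {ω : Ω} (hc : 0 ≤ c)
    (h : ∀ i ∈ l, X i ω ≤ c) : mx X l ω ≤ c := by
  induction l with
  | nil => exact hc
  | cons a l ih =>
    exact max_le (h a (List.mem_cons_self (a := a) (l := l)))
      (ih (fun i hi => h i (List.mem_cons_of_mem a hi)))

lemma mx_eq_zero {l : List (Fin (n + 1))} {ω : Ω} (h : ∀ i ∈ l, X i ω = 0) :
    mx X l ω = 0 := by
  induction l with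
  | nil => rfl
  | cons a l ih =>
    rw [mx_cons, h a (List.mem_cons_self (a := a) (l := l)),
      ih (fun i hi => h i (List.mem_cons_of_mem a hi))]
    simp

lemma measurable_mx (hmeas : ∀ i, Measurable (X i)) (l : List (Fin (n + 1))) :
    Measurable (mx X l) := by
  induction l with
  | nil => exact measurable_const
  | cons a l ih => exact (hmeas a).max ih

lemma mx_le_bound (hXb : ∀ i ω, X i ω ≤ b i) (l : List (Fin (n + 1))) (ω : Ω) :
    mx X l ω ≤ (l.map b).foldr max 0 := by
  induction l with
  | nil => exact le_refl 0
  | cons a l ih => exact max_le_max (hXb a ω) ih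

lemma bound_nonneg (l : List (Fin (n + 1))) : (0 : ℝ) ≤ (l.map b).foldr max 0 := by
  induction l with
  | nil => exact le_refl 0
  | cons a l ih => exact le_trans ih (le_max_right _ _)

lemma integrable_of_bound {f : Ω → ℝ} (hf : Measurable f) (C : ℝ) (h : ∀ ω, |f ω| ≤ C) :
    Integrable f μ :=
  (integrable_const C).mono' hf.aestronglyMeasurable
    (Filter.Eventually.of_forall fun ω => by simpa using h ω)

section Ctx

variable (hmeas : ∀ i, Measurable (X i))
  (hindep : iIndepFun X μ)
  (hb : ∀ i, 0 < b i) (hp0 : ∀ i, 0 < p i) (hp1 : ∀ i, p i < 1)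
  (hval : ∀ i ω, X i ω = 0 ∨ X i ω = b i)
  (hP : ∀ i, μ {ω | X i ω = b i} = ENNReal.ofReal (p i))

include hval hb in
lemma X_nonneg (i : Fin (n + 1)) (ω : Ω) : 0 ≤ X i ω := by
  rcases hval i ω with h | h
  · rw [h]
  · rw [h]; exact (hb i).le

include hval hb in
lemma X_le (i : Fin (n + 1)) (ω : Ω) : X i ω ≤ b i := by
  rcases hval i ω with h | h
  · rw [h]; exact (hb i).le
  · rw [h]

include hmeas hval hb in
lemma integrable_X (i : Fin (n + 1)) : Integrable (X i) μ :=
  integrable_of_bound (hmeas i) (b i) fun ω =>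
    abs_le.mpr ⟨le_trans (by linarith [hb i]) (X_nonneg hb hval i ω), X_le hb hval i ω⟩

include hmeas hval hb in
lemma integrable_mx (l : List (Fin (n + 1))) : Integrable (mx X l) μ :=
  integrable_of_bound (measurable_mx hmeas l) ((l.map b).foldr max 0) fun ω =>
    abs_le.mpr ⟨le_trans (by linarith [bound_nonneg (b := b) l]) (mx_nonneg l ω),
      mx_le_bound (X_le hb hval) l ω⟩

include hmeas hval hb in
lemma integrable_max_mx (c : ℝ) (l : List (Fin (n + 1))) :
    Integrable (fun ω => max c (mx X l ω)) μ :=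
  integrable_of_bound (measurable_const.max (measurable_mx hmeas l))
    (max |c| ((l.map b).foldr max 0)) fun ω => by
      rw [abs_le]
      constructor
      · have := mx_nonneg (X := X) l ω
        have := bound_nonneg (b := b) l
        have := abs_nonneg c
        have := le_max_right c (mx X l ω)
        nlinarith [le_max_left |c| ((l.map b).foldr max 0)]
      · exact max_le (le_trans (le_abs_self c) (le_max_left _ _))
          (le_trans (mx_le_bound (X_le hb hval) l ω) (le_max_right _ _))

include hmeas hval hb hp0 hP in
lemma integral_X (i : Fin (n + 1)) : ∫ ω, X i ω ∂μ = b i * p i := by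
  have hset : {ω | X i ω = b i} = X i ⁻¹' {b i} := by
    ext ω; simp [Set.mem_preimage]
  have hmeasset : MeasurableSet {ω | X i ω = b i} := by
    rw [hset]; exact (hmeas i) (measurableSet_singleton (b i))
  have hXind : (fun ω => X i ω) = fun ω =>
      Set.indicator {ω | X i ω = b i} (fun _ => b i) ω := by
    funext ω
    rcases hval i ω with h | h
    · rw [h, Set.indicator_apply]
      have : ω ∉ {ω | X i ω = b i} := by
        simp only [Set.mem_setOf_eq, h]
        exact fun hh => absurd hh.symm (ne_of_gt (hb i))
      simp [this]
    · rw [h, Set.indicator_apply]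
      have : ω ∈ {ω | X i ω = b i} := h
      simp [this]
  rw [hXind, integral_indicator_const (b i) hmeasset, measureReal_def, hP i, smul_eq_mul,
    ENNReal.toReal_ofReal (hp0 i).le, mul_comm]

include hmeas hval hb hp0 hP in
lemma integral_max_const (i : Fin (n + 1)) {c : ℝ} (hc : 0 ≤ c) :
    ∫ ω, max (X i ω) c ∂μ = (1 - p i) * c + p i * max (b i) c := by
  have hbne : b i ≠ 0 := ne_of_gt (hb i)
  have hpt : ∀ ω, max (X i ω) c = c + X i ω * ((max (b i) c - c) / b i) := by
    intro ω
    rcases hval i ω with h | h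
    · rw [h, max_eq_right hc]; ring
    · rw [h]
      rw [max_comm]
      field_simp
      ring
  have h1 : Integrable (fun ω => X i ω * ((max (b i) c - c) / b i)) μ :=
    (integrable_X hmeas hb hval i).mul_const _
  calc ∫ ω, max (X i ω) c ∂μ
      = ∫ ω, (c + X i ω * ((max (b i) c - c) / b i)) ∂μ := by
        apply integral_congr_ae
        exact Filter.Eventually.of_forall hpt
    _ = c + (∫ ω, X i ω ∂μ) * ((max (b i) c - c) / b i) := by
        rw [integral_add (integrable_const c) h1, integral_const, integral_mul_const]
        simp
    _ = (1 - p i) * c + p i * max (b i) c := by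
        rw [integral_X hmeas hb hp0 hval hP i]
        field_simp
        ring

include hmeas hindep in
lemma indep_mx {i : Fin (n + 1)} {l : List (Fin (n + 1))} (hi : i ∉ l) :
    IndepFun (X i) (mx X l) μ := by
  classical
  have hdisj : Disjoint ({i} : Finset (Fin (n + 1))) l.toFinset := by
    rw [Finset.disjoint_singleton_left]
    simpa using hi
  have base := hindep.indepFun_finset {i} l.toFinset hdisj hmeas
  set φ₁ : ({ x // x ∈ ({i} : Finset (Fin (n + 1))) } → ℝ) → ℝ :=
    fun t => t ⟨i, Finset.mem_singleton_self i⟩ with hφ₁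
  set φ₂ : ({ x // x ∈ l.toFinset } → ℝ) → ℝ := fun t =>
    (l.map fun a => if h : a ∈ l.toFinset then t ⟨a, h⟩ else 0).foldr max 0 with hφ₂
  have mφ₁ : Measurable φ₁ := measurable_pi_apply _
  have mφ₂ : Measurable φ₂ := by
    have : ∀ (L : List (Fin (n + 1))),
        Measurable fun t : { x // x ∈ l.toFinset } → ℝ =>
          (L.map fun a => if h : a ∈ l.toFinset then t ⟨a, h⟩ else 0).foldr max 0 := by
      intro L
      induction L with
      | nil => simpa using measurable_const
      | cons a L ih =>
        simp only [List.map_cons, List.foldr_cons]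
        by_cases h : a ∈ l.toFinset
        · simp only [dif_pos h]
          exact (measurable_pi_apply _).max ih
        · simp only [dif_neg h]
          exact measurable_const.max ih
    exact this l
  have := base.comp mφ₁ mφ₂
  have e1 : (φ₁ ∘ fun ω (k : { x // x ∈ ({i} : Finset (Fin (n + 1))) }) => X k ω) = X i := rfl
  have e2 : (φ₂ ∘ fun ω (k : { x // x ∈ l.toFinset }) => X k ω) = mx X l := by
    funext ω
    simp only [Function.comp_apply, hφ₂, mx]
    congr 1
    apply List.map_congr_left
    intro a ha
    simp [List.mem_toFinset.mpr ha]
  rwa [e1, e2] at this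

include hmeas hindep hval hb hp0 hP in
lemma integral_max_mx {i : Fin (n + 1)} {l : List (Fin (n + 1))} (hi : i ∉ l) :
    ∫ ω, max (X i ω) (mx X l ω) ∂μ =
      (1 - p i) * (∫ ω, mx X l ω ∂μ) + p i * ∫ ω, max (b i) (mx X l ω) ∂μ := by
  have hbne : b i ≠ 0 := ne_of_gt (hb i)
  set Y := mx X l with hY
  set Z : Ω → ℝ := fun ω => (max (b i) (Y ω) - Y ω) / b i with hZ
  have hpt : ∀ ω, max (X i ω) (Y ω) = Y ω + X i ω * Z ω := by
    intro ω
    rcases hval i ω with h | h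
    · rw [h, max_eq_right (mx_nonneg l ω)]; simp [hZ, hY]
    · rw [h, hZ]
      field_simp
      try rw [max_comm]
      try ring
  have hZmeas : Measurable Z :=
    ((measurable_const.max (measurable_mx hmeas l)).sub (measurable_mx hmeas l)).div_const _
  have hZint : Integrable Z μ := by
    apply integrable_of_bound hZmeas 1
    intro ω
    have h1 : 0 ≤ max (b i) (Y ω) - Y ω := sub_nonneg.mpr (le_max_right _ _)
    have h2 : max (b i) (Y ω) - Y ω ≤ b i := by
      have : max (b i) (Y ω) ≤ b i + Y ω :=
        max_le (le_add_of_nonneg_right (mx_nonneg l ω)) (le_add_of_nonneg_left (hb i).le)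
      linarith
    rw [hZ, abs_div, abs_of_nonneg h1, abs_of_pos (hb i)]
    rw [div_le_one (hb i)]
    exact h2
  have hXZindep : IndepFun (X i) Z μ := by
    have h := indep_mx hmeas hindep hi
    have h2 := h.comp (φ := id) (ψ := fun t : ℝ => (max (b i) t - t) / b i) measurable_id
      (((measurable_const.max measurable_id).sub measurable_id).div_const (b i))
    exact h2
  have hmul : ∫ ω, X i ω * Z ω ∂μ = (∫ ω, X i ω ∂μ) * ∫ ω, Z ω ∂μ := by
    have := hXZindep.integral_fun_mul_eq_mul_integral (integrable_X hmeas hb hval i).aestronglyMeasurable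
      hZint.aestronglyMeasurable
    simpa [Pi.mul_apply] using this
  have hintZ : ∫ ω, Z ω ∂μ =
      ((∫ ω, max (b i) (Y ω) ∂μ) - ∫ ω, Y ω ∂μ) / b i := by
    rw [hZ]
    rw [integral_div]
    congr 1
    exact integral_sub (integrable_max_mx hmeas hb hval (b i) l)
      (integrable_mx hmeas hb hval l)
  calc ∫ ω, max (X i ω) (Y ω) ∂μ = ∫ ω, (Y ω + X i ω * Z ω) ∂μ := by
        apply integral_congr_ae
        exact Filter.Eventually.of_forall hpt
    _ = (∫ ω, Y ω ∂μ) + ∫ ω, X i ω * Z ω ∂μ := by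
        apply integral_add (integrable_mx hmeas hb hval l)
        apply integrable_of_bound ((hmeas i).mul hZmeas) (b i * 1)
        intro ω
        rw [Pi.mul_apply, abs_mul]
        apply mul_le_mul _ _ (abs_nonneg _) (hb i).le
        · exact abs_le.mpr ⟨le_trans (by linarith [hb i]) (X_nonneg hb hval i ω),
            X_le hb hval i ω⟩
        · have h1 : 0 ≤ max (b i) (Y ω) - Y ω := sub_nonneg.mpr (le_max_right _ _)
          have h2 : max (b i) (Y ω) - Y ω ≤ b i := by
            have : max (b i) (Y ω) ≤ b i + Y ω :=
              max_le (le_add_of_nonneg_right (mx_nonneg l ω)) (le_add_of_nonneg_left (hb i).le)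
            linarith
          rw [hZ, abs_div, abs_of_nonneg h1, abs_of_pos (hb i), div_le_one (hb i)]
          exact h2
    _ = (1 - p i) * (∫ ω, Y ω ∂μ) + p i * ∫ ω, max (b i) (Y ω) ∂μ := by
        rw [hmul, hintZ, integral_X hmeas hb hp0 hval hP i]
        field_simp
        ring

include hmeas hval hb in
lemma const_le_integral_max (i : Fin (n + 1)) (l : List (Fin (n + 1))) :
    b i ≤ ∫ ω, max (b i) (mx X l ω) ∂μ := by
  have := integral_mono (μ := μ) (integrable_const (b i))
    (integrable_max_mx hmeas hb hval (b i) l) (fun ω => le_max_left _ _)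
  simpa using this

include hmeas hval hb in
lemma integral_mx_le_integral_max (i : Fin (n + 1)) (l : List (Fin (n + 1))) :
    ∫ ω, mx X l ω ∂μ ≤ ∫ ω, max (b i) (mx X l ω) ∂μ :=
  integral_mono (integrable_mx hmeas hb hval l)
    (integrable_max_mx hmeas hb hval (b i) l) (fun ω => le_max_right _ _)

include hmeas hindep hval hb hp0 hp1 hP in
lemma weak : ∀ l : List (Fin (n + 1)), l.Nodup →
    0 ≤ stopVal μ (l.map fun i => X i) ∧
      stopVal μ (l.map fun i => X i) ≤ ∫ ω, mx X l ω ∂μ := by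
  intro l
  induction l with
  | nil =>
    intro _
    constructor
    · exact le_refl 0
    · simp [stopVal, mx_nil]
  | cons i l ih =>
    intro hnd
    have hnd' : l.Nodup := (List.nodup_cons.mp hnd).2
    have hi : i ∉ l := (List.nodup_cons.mp hnd).1
    obtain ⟨hV0, hVle⟩ := ih hnd'
    have hunfold : stopVal μ ((i :: l).map fun i => X i) =
        ∫ ω, max (X i ω) (stopVal μ (l.map fun i => X i)) ∂μ := rfl
    rw [hunfold, integral_max_const hmeas hb hp0 hval hP i hV0]
    have hE : ∫ ω, mx X (i :: l) ω ∂μ =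
        (1 - p i) * (∫ ω, mx X l ω ∂μ) + p i * ∫ ω, max (b i) (mx X l ω) ∂μ := by
      have : ∀ ω, mx X (i :: l) ω = max (X i ω) (mx X l ω) := fun ω => rfl
      calc ∫ ω, mx X (i :: l) ω ∂μ = ∫ ω, max (X i ω) (mx X l ω) ∂μ := by
            apply integral_congr_ae; exact Filter.Eventually.of_forall this
        _ = _ := integral_max_mx hmeas hindep hb hp0 hval hP hi
    constructor
    · have h1 : (0 : ℝ) ≤ 1 - p i := by linarith [hp1 i]
      have h2 : (0 : ℝ) ≤ max (b i) (stopVal μ (l.map fun i => X i)) :=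
        le_trans (hb i).le (le_max_left _ _)
      have := hp0 i
      nlinarith
    · rw [hE]
      have h1 : (0 : ℝ) ≤ 1 - p i := by linarith [hp1 i]
      have h2 : max (b i) (stopVal μ (l.map fun i => X i)) ≤
          ∫ ω, max (b i) (mx X l ω) ∂μ :=
        max_le (const_le_integral_max hmeas hb hval i l)
          (le_trans hVle (integral_mx_le_integral_max hmeas hb hval i l))
      have h3 := mul_le_mul_of_nonneg_left hVle h1
      have h4 := mul_le_mul_of_nonneg_left h2 (hp0 i).le
      linarith

include hmeas hindep hval hb hp0 hp1 hP in
lemma meas_all_zero_pos (l : List (Fin (n + 1))) :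
    0 < μ (⋂ k ∈ l.toFinset, X k ⁻¹' ({0} : Set ℝ)) := by
  classical
  rw [hindep.measure_inter_preimage_eq_mul l.toFinset
    (sets := fun _ => ({0} : Set ℝ)) (fun i _ => measurableSet_singleton 0)]
  apply CanonicallyOrderedAdd.prod_pos.mpr
  intro k _
  have hcompl : X k ⁻¹' ({0} : Set ℝ) = {ω | X k ω = b k}ᶜ := by
    ext ω
    simp only [Set.mem_preimage, Set.mem_singleton_iff, Set.mem_compl_iff, Set.mem_setOf_eq]
    constructor
    · intro h hb'
      rw [h] at hb'
      exact absurd hb'.symm (ne_of_gt (hb k))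
    · intro h
      rcases hval k ω with h' | h'
      · exact h'
      · exact absurd h' h
  have hmeasset : MeasurableSet {ω | X k ω = b k} := by
    have : {ω | X k ω = b k} = X k ⁻¹' {b k} := by ext ω; simp [Set.mem_preimage]
    rw [this]; exact (hmeas k) (measurableSet_singleton (b k))
  rw [hcompl, measure_compl hmeasset (measure_ne_top μ _), hP k, measure_univ]
  have : ENNReal.ofReal (p k) < 1 := by
    rw [← ENNReal.ofReal_one]
    exact ENNReal.ofReal_lt_ofReal_iff_of_nonneg (hp0 k).le |>.mpr (hp1 k)
  exact tsub_pos_of_lt this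

include hmeas hindep hval hb hp0 hp1 hP in
lemma integral_mx_lt_integral_max (i : Fin (n + 1)) (l : List (Fin (n + 1))) :
    ∫ ω, mx X l ω ∂μ < ∫ ω, max (b i) (mx X l ω) ∂μ := by
  classical
  set A := ⋂ k ∈ l.toFinset, X k ⁻¹' ({0} : Set ℝ) with hA
  have hAmeas : MeasurableSet A := by
    apply MeasurableSet.biInter (Set.to_countable _)
    intro k _
    exact (hmeas k) (measurableSet_singleton 0)
  have hApos : 0 < μ A := meas_all_zero_pos hmeas hindep hb hp0 hp1 hval hP l
  have hpt : ∀ ω, mx X l ω + A.indicator (fun _ => b i) ω ≤ max (b i) (mx X l ω) := by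
    intro ω
    by_cases hω : ω ∈ A
    · have hz : ∀ k ∈ l, X k ω = 0 := by
        intro k hk
        have := Set.mem_iInter₂.mp hω k (List.mem_toFinset.mpr hk)
        simpa using this
      rw [mx_eq_zero hz, Set.indicator_of_mem hω]
      simp [le_max_left]
    · rw [Set.indicator_of_notMem hω]
      simpa using le_max_right (b i) (mx X l ω)
  have hint : ∫ ω, (mx X l ω + A.indicator (fun _ => b i) ω) ∂μ =
      (∫ ω, mx X l ω ∂μ) + b i * (μ A).toReal := by
    rw [integral_add (integrable_mx hmeas hb hval l)
      ((integrable_const (b i)).indicator hAmeas), integral_indicator_const _ hAmeas,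
      smul_eq_mul, mul_comm, measureReal_def]
  have hmono := integral_mono (μ := μ)
    ((integrable_mx hmeas hb hval l).add ((integrable_const (b i)).indicator hAmeas))
    (integrable_max_mx hmeas hb hval (b i) l) hpt
  simp only [Pi.add_apply] at hmono
  rw [hint] at hmono
  have htoReal : 0 < (μ A).toReal :=
    ENNReal.toReal_pos (ne_of_gt hApos) (measure_ne_top μ A)
  nlinarith [hb i]

include hmeas hval hb hp0 hP in
lemma const_lt_integral_max {i c : Fin (n + 1)} {l : List (Fin (n + 1))}
    (hc : c ∈ l) (hbc : b i < b c) :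
    b i < ∫ ω, max (b i) (mx X l ω) ∂μ := by
  classical
  set E := {ω | X c ω = b c} with hE
  have hEmeas : MeasurableSet E := by
    have : E = X c ⁻¹' {b c} := by ext ω; simp [hE, Set.mem_preimage]
    rw [this]; exact (hmeas c) (measurableSet_singleton (b c))
  have hpt : ∀ ω, b i + E.indicator (fun _ => b c - b i) ω ≤ max (b i) (mx X l ω) := by
    intro ω
    by_cases hω : ω ∈ E
    · rw [Set.indicator_of_mem hω]
      have h1 : X c ω = b c := hω
      have h2 : b c ≤ mx X l ω := h1 ▸ le_mx hc ω
      have : b c ≤ max (b i) (mx X l ω) := le_trans h2 (le_max_right _ _)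
      linarith
    · rw [Set.indicator_of_notMem hω]
      simpa using le_max_left (b i) (mx X l ω)
  have hint : ∫ ω, (b i + E.indicator (fun _ => b c - b i) ω) ∂μ =
      b i + (b c - b i) * p c := by
    rw [integral_add (integrable_const _) ((integrable_const _).indicator hEmeas),
      integral_const, integral_indicator_const _ hEmeas, measureReal_def μ E, hP c, smul_eq_mul,
      ENNReal.toReal_ofReal (hp0 c).le]
    simp [mul_comm]
  have hmono := integral_mono (μ := μ)
    ((integrable_const (b i)).add ((integrable_const _).indicator hEmeas))
    (integrable_max_mx hmeas hb hval (b i) l) hpt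
  simp only [Pi.add_apply] at hmono
  rw [hint] at hmono
  nlinarith [hp0 c]

include hmeas hindep hval hb hp0 hp1 hP in
lemma strict : ∀ (k : ℕ) (l : List (Fin (n + 1))), l.Nodup →
    ∀ (h1 : k < l.length) (h2 : k + 1 < l.length), b (l[k]'h1) < b (l[k+1]'h2) →
    stopVal μ (l.map fun i => X i) < ∫ ω, mx X l ω ∂μ := by
  intro k
  induction k with
  | zero =>
    intro l hnd h1 h2 hlt
    revert hnd h1 h2 hlt
    cases l with
    | nil => intro _ h1 _ _; simp at h1
    | cons a l' =>
    cases l' with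
    | nil => intro _ _ h2 _; simp at h2
    | cons c l₂ =>
      intro hnd h1 h2 hlt
      simp only [List.getElem_cons_zero, List.getElem_cons_succ] at hlt
      have hnd' : (c :: l₂).Nodup := (List.nodup_cons.mp hnd).2
      have ha : a ∉ (c :: l₂) := (List.nodup_cons.mp hnd).1
      obtain ⟨hV0, hVle⟩ := weak hmeas hindep hb hp0 hp1 hval hP (c :: l₂) hnd'
      have hunfold : stopVal μ ((a :: c :: l₂).map fun i => X i) =
          ∫ ω, max (X a ω) (stopVal μ ((c :: l₂).map fun i => X i)) ∂μ := rfl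
      rw [hunfold, integral_max_const hmeas hb hp0 hval hP a hV0]
      have hE : ∫ ω, mx X (a :: c :: l₂) ω ∂μ =
          (1 - p a) * (∫ ω, mx X (c :: l₂) ω ∂μ) +
            p a * ∫ ω, max (b a) (mx X (c :: l₂) ω) ∂μ := by
        calc ∫ ω, mx X (a :: c :: l₂) ω ∂μ
            = ∫ ω, max (X a ω) (mx X (c :: l₂) ω) ∂μ := by
              apply integral_congr_ae; exact Filter.Eventually.of_forall fun ω => rfl
          _ = _ := integral_max_mx hmeas hindep hb hp0 hval hP ha
      rw [hE]
      have key1 : ∫ ω, mx X (c :: l₂) ω ∂μ < ∫ ω, max (b a) (mx X (c :: l₂) ω) ∂μ :=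
        integral_mx_lt_integral_max hmeas hindep hb hp0 hp1 hval hP a (c :: l₂)
      have key2 : b a < ∫ ω, max (b a) (mx X (c :: l₂) ω) ∂μ :=
        const_lt_integral_max hmeas hb hp0 hval hP (List.mem_cons_self (a := c) (l := l₂)) hlt
      have hmaxlt : max (b a) (stopVal μ ((c :: l₂).map fun i => X i)) <
          ∫ ω, max (b a) (mx X (c :: l₂) ω) ∂μ :=
        max_lt key2 (lt_of_le_of_lt hVle key1)
      have h1' : (0 : ℝ) ≤ 1 - p a := by linarith [hp1 a]
      have := mul_le_mul_of_nonneg_left hVle h1'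
      have := mul_lt_mul_of_pos_left hmaxlt (hp0 a)
      linarith
  | succ k ih =>
    intro l hnd h1 h2 hlt
    revert hnd h1 h2 hlt
    cases l with
    | nil => intro _ h1 _ _; simp at h1
    | cons x l' =>
      intro hnd h1 h2 hlt
      simp only [List.getElem_cons_succ] at hlt
      have hnd' : l'.Nodup := (List.nodup_cons.mp hnd).2
      have hx : x ∉ l' := (List.nodup_cons.mp hnd).1
      have hlen1 : k < l'.length := by
        simp only [List.length_cons] at h2; omega
      have hlen2 : k + 1 < l'.length := by
        simp only [List.length_cons] at h2; omega
      have hVlt := ih l' hnd' hlen1 hlen2 hlt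
      obtain ⟨hV0, _⟩ := weak hmeas hindep hb hp0 hp1 hval hP l' hnd'
      have hunfold : stopVal μ ((x :: l').map fun i => X i) =
          ∫ ω, max (X x ω) (stopVal μ (l'.map fun i => X i)) ∂μ := rfl
      rw [hunfold, integral_max_const hmeas hb hp0 hval hP x hV0]
      have hE : ∫ ω, mx X (x :: l') ω ∂μ =
          (1 - p x) * (∫ ω, mx X l' ω ∂μ) + p x * ∫ ω, max (b x) (mx X l' ω) ∂μ := by
        calc ∫ ω, mx X (x :: l') ω ∂μ
            = ∫ ω, max (X x ω) (mx X l' ω) ∂μ := by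
              apply integral_congr_ae; exact Filter.Eventually.of_forall fun ω => rfl
          _ = _ := integral_max_mx hmeas hindep hb hp0 hval hP hx
      rw [hE]
      have h1' : (0 : ℝ) < 1 - p x := by linarith [hp1 x]
      have hmaxle : max (b x) (stopVal μ (l'.map fun i => X i)) ≤
          ∫ ω, max (b x) (mx X l' ω) ∂μ :=
        max_le (const_le_integral_max hmeas hb hval x l')
          (le_trans hVlt.le (integral_mx_le_integral_max hmeas hb hval x l'))
      have := mul_lt_mul_of_pos_left hVlt h1'
      have := mul_le_mul_of_nonneg_left hmaxle (hp0 x).le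
      linarith

end Ctx

end Stmt8Aux

theorem stmt8 {Ω : Type*} [MeasurableSpace Ω] (μ : Measure Ω) [IsProbabilityMeasure μ]
    (n : ℕ) (X : Fin (n + 1) → Ω → ℝ) (b p : Fin (n + 1) → ℝ)
    (hmeas : ∀ i, Measurable (X i))
    (hindep : iIndepFun X μ)
    (hb : ∀ i, 0 < b i) (hp0 : ∀ i, 0 < p i) (hp1 : ∀ i, p i < 1)
    (hval : ∀ i ω, X i ω = 0 ∨ X i ω = b i)
    (hP : ∀ i, μ {ω | X i ω = b i} = ENNReal.ofReal (p i))
    (σ : Equiv.Perm (Fin (n + 1))) (j : Fin n)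
    (hj : b (σ j.castSucc) < b (σ j.succ)) :
    stopVal μ (List.ofFn fun k => X (σ k)) <
      ∫ ω, Finset.univ.sup' Finset.univ_nonempty (fun i => X i ω) ∂μ := by
  classical
  set l : List (Fin (n + 1)) := List.ofFn σ with hl
  have hmaplist : (List.ofFn fun k => X (σ k)) = l.map fun i => X i := by
    rw [hl, List.map_ofFn]
    rfl
  have hsup : ∀ ω, Finset.univ.sup' Finset.univ_nonempty (fun i => X i ω) =
      Stmt8Aux.mx X l ω := by
    intro ω
    apply le_antisymm
    · apply Finset.sup'_le
      intro i _
      have hmem : i ∈ l := by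
        rw [hl, List.mem_ofFn]
        exact ⟨σ.symm i, by simp⟩
      exact Stmt8Aux.le_mx hmem ω
    · have hnn : (0 : ℝ) ≤ Finset.univ.sup' Finset.univ_nonempty (fun i => X i ω) :=
        le_trans (Stmt8Aux.X_nonneg hb hval 0 ω)
          (Finset.le_sup' (fun i => X i ω) (Finset.mem_univ 0))
      exact Stmt8Aux.mx_le hnn (fun i _ => Finset.le_sup' (fun i => X i ω) (Finset.mem_univ i))
  have hintcongr : ∫ ω, Finset.univ.sup' Finset.univ_nonempty (fun i => X i ω) ∂μ =
      ∫ ω, Stmt8Aux.mx X l ω ∂μ := by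
    apply integral_congr_ae
    exact Filter.Eventually.of_forall hsup
  rw [hmaplist, hintcongr]
  have hnd : l.Nodup := by
    rw [hl]
    exact List.nodup_ofFn.mpr σ.injective
  have hlen : l.length = n + 1 := by rw [hl]; simp
  have h1 : (j : ℕ) < l.length := by omega
  have h2 : (j : ℕ) + 1 < l.length := by
    have := j.isLt; omega
  have hget1 : l[(j : ℕ)]'h1 = σ j.castSucc := by
    simp only [hl, List.getElem_ofFn]
    try congr 1
    try exact Fin.ext rfl
  have hget2 : l[(j : ℕ) + 1]'h2 = σ j.succ := by
    simp only [hl, List.getElem_ofFn]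
    try congr 1
    try exact Fin.ext rfl
  apply Stmt8Aux.strict hmeas hindep hb hp0 hp1 hval hP (j : ℕ) l hnd h1 h2
  rw [hget1, hget2]
  exact hj
end

section
/- Left support property: Let X₁,…,Xₙ be independent bounded random variables. There exists an ordering σ maximizing the optimal stopping value V_σ such that for every i = 1,…,n−1, P(X_{σ(i)} ≤ V_σ(i+1)) > 0, where V_σ(i+1) is the optimal stopping value of the remaining suffix X_{σ(i+1)},…,X_{σ(n)}. -/
open MeasureTheory ProbabilityTheory

section Aux

variable {Ω : Type*} [MeasurableSpace Ω] (μ : Measure Ω) [IsProbabilityMeasure μ]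
  {n : ℕ} (X : Fin n → Ω → ℝ)

/-- Suffix value starting at position `j` under ordering `σ`. -/
noncomputable def WV (σ : Equiv.Perm (Fin n)) (j : ℕ) : ℝ :=
  stopVal μ ((List.ofFn fun k => X (σ k)).drop j)

variable {X}

lemma WV_of_le (σ : Equiv.Perm (Fin n)) {j : ℕ} (h : n ≤ j) : WV μ X σ j = 0 := by
  unfold WV
  rw [List.drop_eq_nil_of_le (by simpa using h)]
  rfl

lemma WV_rec (σ : Equiv.Perm (Fin n)) {j : ℕ} (h : j < n) :
    WV μ X σ j = ∫ ω, max (X (σ ⟨j, h⟩) ω) (WV μ X σ (j + 1)) ∂μ := by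
  unfold WV
  rw [List.drop_eq_getElem_cons (by simpa using h)]
  simp only [List.getElem_ofFn]
  rfl

variable {C : ℝ} (hC : ∀ i ω, |X i ω| ≤ C) (hmeas : ∀ i, Measurable (X i))

include hC hmeas

lemma int_max (i : Fin n) (c : ℝ) :
    Integrable (fun ω => max (X i ω) c) μ := by
  refine Integrable.mono' (integrable_const (max C |c|))
    (((hmeas i).max measurable_const).aestronglyMeasurable) (ae_of_all _ fun ω => ?_)
  rw [Real.norm_eq_abs, abs_le]
  constructor
  · calc -(max C |c|) ≤ -C := neg_le_neg (le_max_left _ _)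
      _ ≤ X i ω := neg_le_of_abs_le (hC i ω)
      _ ≤ max (X i ω) c := le_max_left _ _
  · exact max_le_max (abs_le.1 (hC i ω)).2 (le_abs_self c)

lemma const_le_int_max (i : Fin n) (c : ℝ) : c ≤ ∫ ω, max (X i ω) c ∂μ := by
  calc c = ∫ _ω, c ∂μ := by simp
    _ ≤ _ := integral_mono (integrable_const c) (int_max μ hC hmeas i c)
      (fun ω => le_max_right _ _)

lemma int_max_mono (i : Fin n) {c d : ℝ} (hcd : c ≤ d) :
    ∫ ω, max (X i ω) c ∂μ ≤ ∫ ω, max (X i ω) d ∂μ :=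
  integral_mono (int_max μ hC hmeas i c) (int_max μ hC hmeas i d)
    (fun ω => max_le_max le_rfl hcd)

lemma WV_succ_le (σ : Equiv.Perm (Fin n)) (j : ℕ) : WV μ X σ (j + 1) ≤ WV μ X σ j := by
  rcases lt_or_ge j n with h | h
  · rw [WV_rec μ σ h]
    exact const_le_int_max μ hC hmeas _ _
  · rw [WV_of_le μ σ h, WV_of_le μ σ (by omega)]

lemma key (σ : Equiv.Perm (Fin n)) (i : Fin n) (hi : (i : ℕ) + 1 < n)
    (hbad : ∀ᵐ ω ∂μ, WV μ X σ ((i : ℕ) + 1) < X (σ i) ω) :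
    ∃ σ' : Equiv.Perm (Fin n),
      (∀ j, WV μ X σ j ≤ WV μ X σ' j) ∧
      WV μ X σ ((i : ℕ) + 1) < WV μ X σ' ((i : ℕ) + 1) := by
  set i' : Fin n := ⟨(i : ℕ) + 1, hi⟩ with hi'def
  set σ' := σ * Equiv.swap i i' with hσ'def
  have hσ'_eq : ∀ (j : ℕ) (h : j < n), j ≠ (i : ℕ) → j ≠ (i : ℕ) + 1 →
      σ' ⟨j, h⟩ = σ ⟨j, h⟩ := by
    intro j h h1 h2
    simp only [hσ'def, Equiv.Perm.mul_apply]
    rw [Equiv.swap_apply_of_ne_of_ne (Fin.ne_of_val_ne h1) (Fin.ne_of_val_ne (by simpa using h2))]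
  have hσ'_i : σ' i = σ i' := by
    simp [hσ'def, Equiv.swap_apply_left]
  have hσ'_i' : σ' i' = σ i := by
    simp [hσ'def, Equiv.swap_apply_right]
  -- tail values coincide
  have tail : ∀ d j, n - j = d → (i : ℕ) + 2 ≤ j → WV μ X σ' j = WV μ X σ j := by
    intro d
    induction d with
    | zero =>
      intro j hd _
      rw [WV_of_le μ _ (by omega), WV_of_le μ _ (by omega)]
    | succ d ih =>
      intro j hd hj
      have hjn : j < n := by omega
      rw [WV_rec μ _ hjn, WV_rec μ _ hjn, hσ'_eq j hjn (by omega) (by omega),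
        ih (j + 1) (by omega) (by omega)]
  have tail2 : WV μ X σ' ((i : ℕ) + 2) = WV μ X σ ((i : ℕ) + 2) :=
    tail _ _ rfl le_rfl
  set c := WV μ X σ ((i : ℕ) + 1) with hc
  have hc2 : WV μ X σ ((i : ℕ) + 2) ≤ c := WV_succ_le μ hC hmeas σ _
  have hEA : WV μ X σ' ((i : ℕ) + 1) = ∫ ω, X (σ i) ω ∂μ := by
    rw [WV_rec μ σ' hi]
    rw [show (⟨(i : ℕ) + 1, hi⟩ : Fin n) = i' from rfl, hσ'_i', tail2]
    apply integral_congr_ae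
    filter_upwards [hbad] with ω hω
    exact max_eq_left (hc2.trans hω.le)
  have hintA : Integrable (X (σ i)) μ := by
    refine Integrable.mono' (integrable_const C) ((hmeas (σ i)).aestronglyMeasurable)
      (ae_of_all _ fun ω => hC (σ i) ω)
  have hEA_gt : c < ∫ ω, X (σ i) ω ∂μ := by
    have h0 : 0 < ∫ ω, (X (σ i) ω - c) ∂μ := by
      rw [integral_pos_iff_support_of_nonneg_ae]
      · rw [pos_iff_ne_zero]
        intro hsupp
        have hz : ∀ᵐ ω ∂μ, X (σ i) ω - c = 0 := by
          rw [ae_iff]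
          simpa [Function.support] using hsupp
        have hfalse : ∀ᵐ ω ∂μ, False := by
          filter_upwards [hz, hbad] with ω h1 h2
          have : (0 : ℝ) < X (σ i) ω - c := sub_pos.2 h2
          linarith
        have h1 : μ {ω | ¬ False} = 0 := ae_iff.1 hfalse
        simp at h1
      · filter_upwards [hbad] with ω hω
        exact sub_nonneg.2 hω.le
      · exact hintA.sub (integrable_const c)
    have hsub : ∫ ω, (X (σ i) ω - c) ∂μ = (∫ ω, X (σ i) ω ∂μ) - c := by
      rw [integral_sub hintA (integrable_const c)]
      simp
    linarith [h0, hsub ▸ h0]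
  have hWi : WV μ X σ (i : ℕ) = ∫ ω, X (σ i) ω ∂μ := by
    rw [WV_rec μ σ (show (i : ℕ) < n by omega)]
    simp only [Fin.eta]
    apply integral_congr_ae
    filter_upwards [hbad] with ω hω
    exact max_eq_left hω.le
  have hstep_i : WV μ X σ (i : ℕ) ≤ WV μ X σ' (i : ℕ) := by
    rw [WV_rec μ σ' (show (i : ℕ) < n by omega)]
    simp only [Fin.eta]
    calc WV μ X σ (i : ℕ) = ∫ ω, X (σ i) ω ∂μ := hWi
      _ = WV μ X σ' ((i : ℕ) + 1) := hEA.symm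
      _ ≤ ∫ ω, max (X (σ' i) ω) (WV μ X σ' ((i : ℕ) + 1)) ∂μ :=
        const_le_int_max μ hC hmeas _ _
  have head : ∀ d j, j + d = (i : ℕ) → WV μ X σ j ≤ WV μ X σ' j := by
    intro d
    induction d with
    | zero =>
      intro j hj
      have : j = (i : ℕ) := by omega
      rw [this]
      exact hstep_i
    | succ d ih =>
      intro j hj
      have hjn : j < n := by omega
      rw [WV_rec μ σ hjn, WV_rec μ σ' hjn, hσ'_eq j hjn (by omega) (by omega)]
      exact int_max_mono μ hC hmeas _ (ih (j + 1) (by omega))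
  have hlt : WV μ X σ ((i : ℕ) + 1) < WV μ X σ' ((i : ℕ) + 1) := by
    rw [hEA]; exact hEA_gt
  refine ⟨σ', fun j => ?_, hlt⟩
  rcases lt_trichotomy j ((i : ℕ) + 1) with h | h | h
  · exact head ((i : ℕ) - j) j (by omega)
  · rw [h]; exact hlt.le
  · rw [tail (n - j) j rfl (by omega)]

end Aux

/-- Left support property: there is an optimal ordering `σ` such that every variable but
the last has positive probability of falling (weakly) below the value of the remaining
suffix. -/
theorem stmt9 {Ω : Type*} [MeasurableSpace Ω] (μ : Measure Ω) [IsProbabilityMeasure μ]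
    (n : ℕ) (X : Fin n → Ω → ℝ)
    (hmeas : ∀ i, Measurable (X i))
    (hindep : iIndepFun X μ)
    (hbdd : ∃ C : ℝ, ∀ i ω, |X i ω| ≤ C) :
    ∃ σ : Equiv.Perm (Fin n),
      (∀ τ : Equiv.Perm (Fin n),
          stopVal μ (List.ofFn fun k => X (τ k)) ≤ stopVal μ (List.ofFn fun k => X (σ k))) ∧
      ∀ i : Fin n, (i : ℕ) + 1 < n →
        0 < μ {ω | X (σ i) ω ≤ stopVal μ ((List.ofFn fun k => X (σ k)).drop ((i : ℕ) + 1))} := by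
  classical
  obtain ⟨C, hC⟩ := hbdd
  set F : Equiv.Perm (Fin n) → ℝ := fun σ => WV μ X σ 0 with hF
  set G : Equiv.Perm (Fin n) → ℝ := fun σ => ∑ j ∈ Finset.range (n + 1), WV μ X σ j with hG
  obtain ⟨σ₀, -, hσ₀⟩ := Finset.exists_max_image Finset.univ F ⟨1, Finset.mem_univ 1⟩
  set S : Finset (Equiv.Perm (Fin n)) := Finset.univ.filter (fun σ => ∀ τ, F τ ≤ F σ) with hS
  have hSne : S.Nonempty := ⟨σ₀, by
    simp only [hS, Finset.mem_filter, Finset.mem_univ, true_and]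
    exact fun τ => hσ₀ τ (Finset.mem_univ τ)⟩
  obtain ⟨σ, hσS, hσG⟩ := Finset.exists_max_image S G hSne
  have hσmax : ∀ τ, F τ ≤ F σ := by
    simpa [hS, Finset.mem_filter] using hσS
  refine ⟨σ, fun τ => hσmax τ, ?_⟩
  intro i hi
  by_contra hpos
  have hzero : μ {ω | X (σ i) ω ≤
      stopVal μ ((List.ofFn fun k => X (σ k)).drop ((i : ℕ) + 1))} = 0 :=
    le_antisymm (not_lt.mp hpos) zero_le
  have hbad : ∀ᵐ ω ∂μ, WV μ X σ ((i : ℕ) + 1) < X (σ i) ω := by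
    rw [ae_iff]
    have hset : {ω | ¬ WV μ X σ ((i : ℕ) + 1) < X (σ i) ω} =
        {ω | X (σ i) ω ≤ stopVal μ ((List.ofFn fun k => X (σ k)).drop ((i : ℕ) + 1))} := by
      ext ω; simp [not_lt, WV]
    rw [hset]
    exact hzero
  obtain ⟨σ', hle, hlt⟩ := key μ hC hmeas σ i hi hbad
  have hσ'S : σ' ∈ S := by
    simp only [hS, Finset.mem_filter, Finset.mem_univ, true_and]
    exact fun τ => (hσmax τ).trans (hle 0)
  have hGlt : G σ < G σ' := by
    apply Finset.sum_lt_sum (fun j _ => hle j)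
    exact ⟨(i : ℕ) + 1, Finset.mem_range.mpr (by omega), hlt⟩
  exact absurd (hσG σ' hσ'S) (not_le.mpr hGlt)
end

section
/- Adjacent interchange within T: With Xᵢ, Xⱼ independent three-point variables on {0,mᵢ,1} and {0,mⱼ,1} (probabilities pᵢ,qᵢ and pⱼ,qⱼ for middle and right points), both accepted at any positive value, the difference in expected reward between ordering Xᵢ before Xⱼ versus Xⱼ before Xᵢ (with fixed thresholds, common prefix L and suffix R) equals f(L)·(pⱼ+qⱼ)(pᵢmᵢ+qᵢ) − f(L)·(pᵢ+qᵢ)(pⱼmⱼ+qⱼ), which has the same sign as Eᵢ − Eⱼ where Eₖ = (mₖpₖ+qₖ)/(pₖ+qₖ). -/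
lemma sub_mul_pos_iff_div_lt_div {a b s t : ℝ} (hs : 0 < s) (ht : 0 < t) :
    0 < t * a - s * b ↔ b / t < a / s := by
  rw [sub_pos, div_lt_div_iff₀ ht hs]
  constructor <;> intro h <;> linarith

lemma sub_mul_eq_zero_iff_div_eq_div {a b s t : ℝ} (hs : 0 < s) (ht : 0 < t) :
    t * a - s * b = 0 ↔ a / s = b / t := by
  rw [sub_eq_zero, div_eq_div_iff hs.ne' ht.ne']
  constructor <;> intro h <;> linarith

theorem stmt11_general (fL EL fR ER pi qi pj qj mi mj : ℝ)
    (hpi : 0 < pi) (hqi : 0 < qi)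
    (hpj : 0 < pj) (hqj : 0 < qj)
    (Vij Vji Ei Ej : ℝ)
    (hVij : Vij = EL * (1 - fL) +
      fL * (pi * mi + qi + (1 - qi - pi) * (pj * mj + qj) +
        (1 - qi - pi) * (1 - qj - pj) * (ER * (1 - fR))))
    (hVji : Vji = EL * (1 - fL) +
      fL * (pj * mj + qj + (1 - qj - pj) * (pi * mi + qi) +
        (1 - qj - pj) * (1 - qi - pi) * (ER * (1 - fR))))
    (hEi : Ei = (mi * pi + qi) / (pi + qi)) (hEj : Ej = (mj * pj + qj) / (pj + qj)) :
    Vij - Vji = fL * ((pj + qj) * (pi * mi + qi) - (pi + qi) * (pj * mj + qj)) ∧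
      (0 < fL → (0 < Vij - Vji ↔ Ej < Ei) ∧ (Vij - Vji = 0 ↔ Ei = Ej)) := by
  -- The prefix term and the suffix term are symmetric in `i` and `j`, so they cancel.
  have hdiff : Vij - Vji =
      fL * ((pj + qj) * (pi * mi + qi) - (pi + qi) * (pj * mj + qj)) := by
    subst hVij hVji; ring
  refine ⟨hdiff, fun hfL => ?_⟩
  rw [hdiff, mul_pos_iff_of_pos_left hfL, mul_eq_zero_iff_left hfL.ne', hEi, hEj,
    mul_comm mi, mul_comm mj]
  exact ⟨sub_mul_pos_iff_div_lt_div (add_pos hpi hqi) (add_pos hpj hqj),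
    sub_mul_eq_zero_iff_div_eq_div (add_pos hpi hqi) (add_pos hpj hqj)⟩

/-- Adjacent interchange within `T`: both `Xᵢ` and `Xⱼ` are accepted at any positive value.
Comparing the fixed-threshold policy values of `(L, Xᵢ, Xⱼ, R)` and `(L, Xⱼ, Xᵢ, R)`, the
difference equals `fL·((pⱼ+qⱼ)(pᵢmᵢ+qᵢ) − (pᵢ+qᵢ)(pⱼmⱼ+qⱼ))`, which has the same sign as
`Eᵢ − Eⱼ` where `Eₖ = (mₖpₖ+qₖ)/(pₖ+qₖ)` (whenever `fL > 0`). -/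
theorem stmt11 (fL EL fR ER pi qi pj qj mi mj : ℝ)
    (hfL0 : 0 ≤ fL) (hfL1 : fL ≤ 1) (hfR0 : 0 ≤ fR) (hfR1 : fR ≤ 1)
    (hpi : 0 < pi) (hqi : 0 < qi) (hpqi : pi + qi < 1)
    (hpj : 0 < pj) (hqj : 0 < qj) (hpqj : pj + qj < 1)
    (hmi0 : 0 < mi) (hmi1 : mi < 1) (hmj0 : 0 < mj) (hmj1 : mj < 1)
    (Vij Vji Ei Ej : ℝ)
    (hVij : Vij = EL * (1 - fL) +
      fL * (pi * mi + qi + (1 - qi - pi) * (pj * mj + qj) +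
        (1 - qi - pi) * (1 - qj - pj) * (ER * (1 - fR))))
    (hVji : Vji = EL * (1 - fL) +
      fL * (pj * mj + qj + (1 - qj - pj) * (pi * mi + qi) +
        (1 - qj - pj) * (1 - qi - pi) * (ER * (1 - fR))))
    (hEi : Ei = (mi * pi + qi) / (pi + qi)) (hEj : Ej = (mj * pj + qj) / (pj + qj)) :
    Vij - Vji = fL * ((pj + qj) * (pi * mi + qi) - (pi + qi) * (pj * mj + qj)) ∧
      (0 < fL → (0 < Vij - Vji ↔ Ej < Ei) ∧ (Vij - Vji = 0 ↔ Ei = Ej)) :=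
  stmt11_general fL EL fR ER pi qi pj qj mi mj hpi hqi hpj hqj Vij Vji Ei Ej hVij hVji hEi hEj
end

section
/- Ordered partition value formula: Let X₁,…,Xₙ be independent three-point variables on {0,mᵢ,1} with P(Xᵢ=1)=qᵢ, P(Xᵢ=mᵢ)=pᵢ, and suppose E[Xᵢ|Xᵢ>0] = c for all i (same constant c). For a partition (S,T) of the indices, the expected reward of the policy that accepts variables in S only at value 1 (in any order) and then accepts variables in T at any positive value (in any order) equals 1 − ∏_{i∈S}(1−qᵢ) + (∏_{i∈S}(1−qᵢ))·(1 − ∏_{j∈T}(1−pⱼ−qⱼ))·c. -/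
/-!
Peel off the first variable probed by the policy. Whether it is accepted is decided by that
variable alone, while the reward collected when it is rejected is a function of the other,
independent variables; hence `E[R] = E[X; X accepted] + P(X rejected) · E[R']`.
In the second phase `E[Xⱼ; Xⱼ > 0] = mⱼpⱼ + qⱼ = c (pⱼ + qⱼ)`, and the recursion telescopes to
`c (1 - ∏ⱼ (1 - pⱼ - qⱼ))`; in the first phase a variable is accepted with probability `qᵢ`
for reward `1`, which produces `1 - ∏ᵢ (1 - qᵢ)` plus `∏ᵢ (1 - qᵢ)` times the value of the second
phase.
-/

open MeasureTheory ProbabilityTheory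
open scoped Classical

/-- The reward collected from a sequence of variables each of which is accepted at any
positive value: the realized value of the first variable with a positive realization. -/
noncomputable def firstPos {Ω : Type*} : List (Ω → ℝ) → Ω → ℝ
  | [], _ => 0
  | X :: rest, ω => if 0 < X ω then X ω else firstPos rest ω

open Set

namespace ProbabilityTheory

variable {Ω ι : Type*} {mΩ : MeasurableSpace Ω} {μ : Measure Ω}

theorem iIndepFun.indepFun_of_measurable_biSup {β : ι → Type*} {mβ : ∀ i, MeasurableSpace (β i)}
    {X : ∀ i, Ω → β i} (hindep : iIndepFun X μ) (hX : ∀ i, Measurable (X i)) {t : Set ι}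
    {i : ι} (hi : i ∉ t) {γ : Type*} [MeasurableSpace γ] {Y : Ω → γ}
    (hY : Measurable[⨆ j ∈ t, (mβ j).comap (X j)] Y) : IndepFun (X i) Y μ := by
  rw [IndepFun_iff_Indep]
  have h := indep_iSup_of_disjoint (fun j => (hX j).comap_le) hindep.iIndep
    (disjoint_singleton_left.2 hi)
  refine indep_of_indep_of_le_right (indep_of_indep_of_le_left h ?_) hY.comap_le
  exact le_iSup₂ (f := fun j (_ : j ∈ ({i} : Set ι)) => (mβ j).comap (X j)) i rfl

theorem measurable_biSup_comap {β : ι → Type*} {mβ : ∀ i, MeasurableSpace (β i)}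
    {X : ∀ i, Ω → β i} {t : Set ι} {i : ι} (hi : i ∈ t) :
    Measurable[⨆ j ∈ t, (mβ j).comap (X j)] (X i) :=
  measurable_iff_comap_le.2 (le_iSup₂ (f := fun j (_ : j ∈ t) => (mβ j).comap (X j)) i hi)

theorem IndepFun.integral_ite_preimage {α : Type*} [MeasurableSpace α] {X : Ω → α}
    {Y Z : Ω → ℝ} (hXY : IndepFun X Y μ) (hX : Measurable X) {s : Set α} [DecidablePred (· ∈ s)]
    (hs : MeasurableSet s) (hZ : IntegrableOn Z (X ⁻¹' s) μ) (hY : Integrable Y μ) :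
    ∫ ω, (if X ω ∈ s then Z ω else Y ω) ∂μ =
      ∫ ω in X ⁻¹' s, Z ω ∂μ + μ.real (X ⁻¹' s)ᶜ * ∫ ω, Y ω ∂μ := by
  have hcompl : ∫ ω in (X ⁻¹' s)ᶜ, Y ω ∂μ = μ.real (X ⁻¹' s)ᶜ * ∫ ω, Y ω ∂μ :=
    ((IndepFun_iff_Indep X Y μ).1 hXY).setIntegral_eq_mul (f := id) hX.comap_le hY.aemeasurable
      ⟨sᶜ, hs.compl, rfl⟩ aestronglyMeasurable_id
  rw [← hcompl, ← integral_piecewise (hX hs) hZ hY.integrableOn]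
  congr 1 with ω
  by_cases h : X ω ∈ s <;> simp [h, piecewise]

end ProbabilityTheory

theorem MeasureTheory.Integrable.ite {Ω : Type*} {mΩ : MeasurableSpace Ω} {μ : Measure Ω}
    {p : Ω → Prop} [DecidablePred p] {f g : Ω → ℝ} (hp : MeasurableSet {ω | p ω})
    (hf : Integrable f μ) (hg : Integrable g μ) :
    Integrable (fun ω => if p ω then f ω else g ω) μ := by
  refine (Integrable.piecewise hp hf.integrableOn hg.integrableOn).congr (ae_of_all _ fun ω => ?_)
  by_cases h : p ω <;> simp [h]

section FirstPos

variable {Ω ι : Type*}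

theorem firstPos_cons (Y : Ω → ℝ) (L : List (Ω → ℝ)) :
    firstPos (Y :: L) = fun ω => if Y ω ∈ Ioi 0 then Y ω else firstPos L ω :=
  rfl

theorem measurable_firstPos {mΩ : MeasurableSpace Ω} {L : List (Ω → ℝ)}
    (h : ∀ Y ∈ L, Measurable Y) : Measurable (firstPos L) := by
  induction L with
  | nil => exact measurable_const
  | cons Y L ih =>
    have hY := h Y List.mem_cons_self
    exact Measurable.ite (hY measurableSet_Ioi) hY
      (ih fun Z hZ => h Z (List.mem_cons_of_mem Y hZ))

theorem integrable_firstPos {mΩ : MeasurableSpace Ω} {μ : Measure Ω} {L : List (Ω → ℝ)}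
    (hm : ∀ Y ∈ L, Measurable Y) (hi : ∀ Y ∈ L, Integrable Y μ) :
    Integrable (firstPos L) μ := by
  induction L with
  | nil => exact integrable_zero _ _ _
  | cons Y L ih =>
    exact (hi Y List.mem_cons_self).ite (hm Y List.mem_cons_self measurableSet_Ioi)
      (ih (fun Z hZ => hm Z (List.mem_cons_of_mem Y hZ))
        fun Z hZ => hi Z (List.mem_cons_of_mem Y hZ))

theorem measurable_firstPos_map_biSup (X : ι → Ω → ℝ) (T : List ι) :
    Measurable[⨆ j ∈ {j | j ∈ T}, MeasurableSpace.comap (X j) inferInstance]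
      (firstPos (T.map X)) :=
  measurable_firstPos <| List.forall_mem_map.2 fun _ hj => measurable_biSup_comap hj

end FirstPos

section Policy

variable {Ω ι : Type*} [DecidableEq ι] {mΩ : MeasurableSpace Ω} {μ : Measure Ω}
  [IsProbabilityMeasure μ] {X : ι → Ω → ℝ}

theorem integral_firstPos_map (hX : ∀ i, Measurable (X i)) (hXint : ∀ i, Integrable (X i) μ)
    (hindep : iIndepFun X μ) {c : ℝ}
    (hc : ∀ i, ∫ ω in X i ⁻¹' Ioi 0, X i ω ∂μ = c * μ.real (X i ⁻¹' Ioi 0))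
    {T : List ι} (hT : T.Nodup) :
    ∫ ω, firstPos (T.map X) ω ∂μ = c * (1 - ∏ j ∈ T.toFinset, μ.real (X j ⁻¹' Ioi 0)ᶜ) := by
  induction T with
  | nil => simp [firstPos]
  | cons j T ih =>
    obtain ⟨hjT, hT⟩ := List.nodup_cons.1 hT
    have hindepj : IndepFun (X j) (firstPos (T.map X)) μ :=
      hindep.indepFun_of_measurable_biSup hX hjT (measurable_firstPos_map_biSup X T)
    have hint : Integrable (firstPos (T.map X)) μ :=
      integrable_firstPos (List.forall_mem_map.2 fun i _ => hX i)
        (List.forall_mem_map.2 fun i _ => hXint i)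
    rw [List.map_cons, firstPos_cons,
      hindepj.integral_ite_preimage (hX j) measurableSet_Ioi (hXint j).integrableOn hint, hc j,
      ih hT, List.toFinset_cons, Finset.prod_insert (mt List.mem_toFinset.1 hjT),
      probReal_compl_eq_one_sub (hX j measurableSet_Ioi)]
    ring

theorem integral_ite_exists_eq_one (hX : ∀ i, Measurable (X i)) (hindep : iIndepFun X μ)
    {S : List ι} (hS : S.Nodup) {t : Set ι} (hSt : ∀ i ∈ S, i ∉ t) {Y : Ω → ℝ}
    (hYm : Measurable[⨆ j ∈ t, MeasurableSpace.comap (X j) inferInstance] Y)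
    (hYint : Integrable Y μ) :
    ∫ ω, (if ∃ i ∈ S, X i ω = 1 then 1 else Y ω) ∂μ =
      1 - ∏ i ∈ S.toFinset, μ.real (X i ⁻¹' {1})ᶜ +
        (∏ i ∈ S.toFinset, μ.real (X i ⁻¹' {1})ᶜ) * ∫ ω, Y ω ∂μ := by
  induction S generalizing t Y with
  | nil => simp
  | cons i S ih =>
    obtain ⟨hiS, hS⟩ := List.nodup_cons.1 hS
    have hit : i ∉ t := hSt i List.mem_cons_self
    set Y' : Ω → ℝ := fun ω => if X i ω ∈ ({1} : Set ℝ) then 1 else Y ω with hY'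
    have hY'm : Measurable[⨆ j ∈ insert i t, MeasurableSpace.comap (X j) inferInstance] Y' :=
      Measurable.ite (measurable_biSup_comap (mem_insert i t) (measurableSet_singleton 1))
        measurable_const (hYm.mono (biSup_mono fun _ => mem_insert_of_mem i) le_rfl)
    have hY'int : Integrable Y' μ :=
      (integrable_const 1).ite (hX i (measurableSet_singleton 1)) hYint
    have hEY' : ∫ ω, Y' ω ∂μ = μ.real (X i ⁻¹' {1}) + μ.real (X i ⁻¹' {1})ᶜ * ∫ ω, Y ω ∂μ := by
      rw [(hindep.indepFun_of_measurable_biSup hX hit hYm).integral_ite_preimage (hX i)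
        (measurableSet_singleton 1) (integrable_const 1).integrableOn hYint, setIntegral_const,
        smul_eq_mul, mul_one]
    -- Testing `X i` after the variables of `S` instead of before them gives the same reward,
    -- so the induction hypothesis applies with `Y'` in place of `Y`.
    have hpt : (fun ω => if ∃ k ∈ i :: S, X k ω = 1 then 1 else Y ω) =
        fun ω => if ∃ k ∈ S, X k ω = 1 then 1 else Y' ω := by
      ext ω
      by_cases h : X i ω = 1 <;> simp [hY', h]
    have hSt' : ∀ k ∈ S, k ∉ insert i t := by
      rintro k hk (rfl | hkt)
      exacts [hiS hk, hSt k (List.mem_cons_of_mem i hk) hkt]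
    rw [hpt, ih hS hSt' hY'm hY'int, hEY', List.toFinset_cons,
      Finset.prod_insert (mt List.mem_toFinset.1 hiS),
      probReal_compl_eq_one_sub (hX i (measurableSet_singleton 1))]
    ring

end Policy

section ThreePoint

variable {Ω : Type*} {mΩ : MeasurableSpace Ω} {μ : Measure Ω} {X : Ω → ℝ} {m : ℝ}

theorem preimage_Ioi_zero_of_three_point (hm : 0 < m)
    (hval : ∀ ω, X ω = 0 ∨ X ω = m ∨ X ω = 1) : X ⁻¹' Ioi 0 = X ⁻¹' {m} ∪ X ⁻¹' {1} := by
  ext ω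
  rcases hval ω with h | h | h <;> simp [h, hm, hm.ne]

theorem integrable_of_three_point [IsFiniteMeasure μ] (hX : Measurable X)
    (hm : m ∈ Ioo 0 1) (hval : ∀ ω, X ω = 0 ∨ X ω = m ∨ X ω = 1) : Integrable X μ :=
  .of_bound hX.aestronglyMeasurable 1 <| ae_of_all _ fun ω => by
    rcases hval ω with h | h | h <;> simp [h, abs_of_pos hm.1, hm.2.le]

theorem measureReal_preimage_Ioi_zero_of_three_point [IsFiniteMeasure μ] (hX : Measurable X)
    (hm : m ∈ Ioo 0 1) (hval : ∀ ω, X ω = 0 ∨ X ω = m ∨ X ω = 1) :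
    μ.real (X ⁻¹' Ioi 0) = μ.real (X ⁻¹' {m}) + μ.real (X ⁻¹' {1}) := by
  rw [preimage_Ioi_zero_of_three_point hm.1 hval,
    measureReal_union ((disjoint_singleton.2 hm.2.ne).preimage X) (hX (measurableSet_singleton 1))]

theorem setIntegral_preimage_Ioi_zero_of_three_point [IsFiniteMeasure μ] (hX : Measurable X)
    (hm : m ∈ Ioo 0 1) (hval : ∀ ω, X ω = 0 ∨ X ω = m ∨ X ω = 1) :
    ∫ ω in X ⁻¹' Ioi 0, X ω ∂μ = m * μ.real (X ⁻¹' {m}) + μ.real (X ⁻¹' {1}) := by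
  have hXint := integrable_of_three_point (μ := μ) hX hm hval
  rw [preimage_Ioi_zero_of_three_point hm.1 hval,
    setIntegral_union ((disjoint_singleton.2 hm.2.ne).preimage X) (hX (measurableSet_singleton 1))
      hXint.integrableOn hXint.integrableOn,
    setIntegral_congr_fun (hX (measurableSet_singleton m)) (fun ω (h : X ω = m) => h),
    setIntegral_congr_fun (hX (measurableSet_singleton 1)) (fun ω (h : X ω = 1) => h),
    setIntegral_const, setIntegral_const, smul_eq_mul, smul_eq_mul, mul_one, mul_comm]

end ThreePoint

theorem stmt14_general {Ω : Type*} [MeasurableSpace Ω] (μ : Measure Ω) [IsProbabilityMeasure μ]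
    (n : ℕ) (X : Fin n → Ω → ℝ) (m p q : Fin n → ℝ) (c : ℝ)
    (hmeas : ∀ i, Measurable (X i))
    (hindep : iIndepFun X μ)
    (hm : ∀ i, m i ∈ Set.Ioo (0 : ℝ) 1)
    (hp : ∀ i, 0 < p i) (hq : ∀ i, 0 < q i)
    (hval : ∀ i ω, X i ω = 0 ∨ X i ω = m i ∨ X i ω = 1)
    (hP1 : ∀ i, μ {ω | X i ω = 1} = ENNReal.ofReal (q i))
    (hPm : ∀ i, μ {ω | X i ω = m i} = ENNReal.ofReal (p i))
    (hc : ∀ i, (m i * p i + q i) / (p i + q i) = c)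
    (S T : List (Fin n)) (hpart : (S ++ T).Perm (List.finRange n)) :
    (∫ ω, (if ∃ i ∈ S, X i ω = 1 then (1 : ℝ) else firstPos (T.map X) ω) ∂μ) =
      1 - ∏ i ∈ S.toFinset, (1 - q i) +
        (∏ i ∈ S.toFinset, (1 - q i)) * (1 - ∏ j ∈ T.toFinset, (1 - p j - q j)) * c := by
  obtain ⟨hS, hT, hST⟩ := List.nodup_append.1 (hpart.nodup_iff.2 (List.nodup_finRange n))
  have hq1 (i : Fin n) : μ.real (X i ⁻¹' {1}) = q i := by
    rw [measureReal_def, ← ENNReal.toReal_ofReal (hq i).le, ← hP1 i]; rfl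
  have hpm (i : Fin n) : μ.real (X i ⁻¹' {m i}) = p i := by
    rw [measureReal_def, ← ENNReal.toReal_ofReal (hp i).le, ← hPm i]; rfl
  have hpos (i : Fin n) : μ.real (X i ⁻¹' Ioi 0) = p i + q i := by
    rw [measureReal_preimage_Ioi_zero_of_three_point (hmeas i) (hm i) (hval i), hpm, hq1]
  have hmean (i : Fin n) : ∫ ω in X i ⁻¹' Ioi 0, X i ω ∂μ = c * μ.real (X i ⁻¹' Ioi 0) := by
    rw [setIntegral_preimage_Ioi_zero_of_three_point (hmeas i) (hm i) (hval i), hpm, hq1,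
      hpos, ← hc i, div_mul_cancel₀ _ (by linarith [hp i, hq i])]
  have hXint (i : Fin n) : Integrable (X i) μ :=
    integrable_of_three_point (hmeas i) (hm i) (hval i)
  have hreward := integral_ite_exists_eq_one (μ := μ) hmeas hindep hS
      (fun i hi hiT => hST i hi i hiT rfl) (measurable_firstPos_map_biSup X T)
      (integrable_firstPos (List.forall_mem_map.2 fun i _ => hmeas i)
        (List.forall_mem_map.2 fun i _ => hXint i))
  rw [integral_firstPos_map hmeas hXint hindep hmean hT] at hreward
  -- The two integrands differ only in the `Decidable` instance chosen for `∃ i ∈ S, _`.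
  refine (Eq.trans ?_ hreward).trans ?_
  · congr!
  simp only [probReal_compl_eq_one_sub (hmeas _ (measurableSet_singleton _)),
    probReal_compl_eq_one_sub (hmeas _ measurableSet_Ioi), hq1, hpos, sub_add_eq_sub_sub]
  ring

/-- Ordered partition value formula: for independent three-point variables on `{0, mᵢ, 1}`
with common conditional expectation `E[Xᵢ | Xᵢ > 0] = c`, the expected reward of the policy
that first probes the variables of `S` (accepting only value `1`) and then the variables of
`T` (accepting any positive value) equals
`1 − ∏_{i∈S}(1−qᵢ) + (∏_{i∈S}(1−qᵢ))·(1 − ∏_{j∈T}(1−pⱼ−qⱼ))·c`. -/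
theorem stmt14 {Ω : Type*} [MeasurableSpace Ω] (μ : Measure Ω) [IsProbabilityMeasure μ]
    (n : ℕ) (X : Fin n → Ω → ℝ) (m p q : Fin n → ℝ) (c : ℝ)
    (hmeas : ∀ i, Measurable (X i))
    (hindep : iIndepFun X μ)
    (hm : ∀ i, m i ∈ Set.Ioo (0 : ℝ) 1)
    (hp : ∀ i, 0 < p i) (hq : ∀ i, 0 < q i) (hpq : ∀ i, p i + q i < 1)
    (hval : ∀ i ω, X i ω = 0 ∨ X i ω = m i ∨ X i ω = 1)
    (hP1 : ∀ i, μ {ω | X i ω = 1} = ENNReal.ofReal (q i))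
    (hPm : ∀ i, μ {ω | X i ω = m i} = ENNReal.ofReal (p i))
    (hc : ∀ i, (m i * p i + q i) / (p i + q i) = c)
    (S T : List (Fin n)) (hpart : (S ++ T).Perm (List.finRange n)) :
    (∫ ω, (if ∃ i ∈ S, X i ω = 1 then (1 : ℝ) else firstPos (T.map X) ω) ∂μ) =
      1 - ∏ i ∈ S.toFinset, (1 - q i) +
        (∏ i ∈ S.toFinset, (1 - q i)) * (1 - ∏ j ∈ T.toFinset, (1 - p j - q j)) * c :=
  stmt14_general μ n X m p q c hmeas hindep hm hp hq hval hP1 hPm hc S T hpart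
end

section
/- If T1 := p_w·b_w + (1−p_w)·μ*, T2 := p*·b* + (1−p*)·p_w·b_w, T3 := μ* where μ* = p*·b* + (1−p*)·a*, and MAX := p*·b* + (1−p*)·p_w·b_w + (1−p*)(1−p_w)·a*, with parameters satisfying 0 ≤ p*, p_w ≤ 1, 0 ≤ a* ≤ b_w ≤ b*, then max(T1, T2, T3) ≥ (4/5)·MAX. -/
/-!
Each of `T1`, `T2`, `T3` falls short of `MAX` by a nonnegative gap:
`MAX - T1 = p* p_w (b* - b_w)`, `MAX - T2 = (1 - p*)(1 - p_w) a*` and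
`MAX - T3 = (1 - p*) p_w (b_w - a*)`. Writing `q = p_w`, the weighted combination
`(1 - q) A₁ + q (1 - q) A₃ + q A₂` of the three gaps is at most `q (1 - q) MAX`, so if every gap
were larger than `MAX / 5` we would get `(1 + q (1 - q)) MAX < 5 q (1 - q) MAX`, contradicting
`q (1 - q) ≤ 1 / 4`.
-/

theorem five_mul_min_le_of_weighted_sum_le {q M A₁ A₂ A₃ : ℝ} (hq0 : 0 ≤ q) (hq1 : q ≤ 1)
    (hA₁ : 0 ≤ A₁) (hA₂ : 0 ≤ A₂) (hA₃ : 0 ≤ A₃) (hM : 0 ≤ M)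
    (h : (1 - q) * A₁ + q * (1 - q) * A₃ + q * A₂ ≤ q * (1 - q) * M) :
    5 * min (min A₁ A₂) A₃ ≤ M := by
  set m := min (min A₁ A₂) A₃
  have hm₁ : m ≤ A₁ := (min_le_left _ _).trans (min_le_left _ _)
  have hm₂ : m ≤ A₂ := (min_le_left _ _).trans (min_le_right _ _)
  have hm₃ : m ≤ A₃ := min_le_right _ _
  have hm : 0 ≤ m := le_min (le_min hA₁ hA₂) hA₃
  have hq1' : 0 ≤ 1 - q := sub_nonneg.2 hq1
  have hquarter : q * (1 - q) ≤ 1 / 4 := by nlinarith [sq_nonneg (2 * q - 1)]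
  have hlower : (1 + q * (1 - q)) * m ≤ q * (1 - q) * M := by
    nlinarith [mul_le_mul_of_nonneg_left hm₁ hq1', mul_le_mul_of_nonneg_left hm₂ hq0,
      mul_le_mul_of_nonneg_left hm₃ (mul_nonneg hq0 hq1')]
  have hscaled : q * (1 - q) * (5 * m) ≤ q * (1 - q) * M := by
    nlinarith [mul_le_mul_of_nonneg_left hquarter hm]
  rcases (mul_nonneg hq0 hq1').eq_or_lt with ht | ht
  · rw [← ht] at hlower
    linarith
  · exact le_of_mul_le_mul_left hscaled ht

theorem weighted_gaps_le (ps pw as bw bs : ℝ) (hps0 : 0 ≤ ps) (hpw0 : 0 ≤ pw) (hpw1 : pw ≤ 1)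
    (hbw : 0 ≤ bw) :
    (1 - pw) * (ps * pw * (bs - bw)) + pw * (1 - pw) * ((1 - ps) * pw * (bw - as))
        + pw * ((1 - ps) * (1 - pw) * as)
      ≤ pw * (1 - pw) * (ps * bs + (1 - ps) * (pw * bw) + (1 - ps) * (1 - pw) * as) := by
  have hslack : 0 ≤ pw * (1 - pw) * ps * bw :=
    mul_nonneg (mul_nonneg (mul_nonneg hpw0 (sub_nonneg.2 hpw1)) hps0) hbw
  linarith [show pw * (1 - pw) * (ps * bs + (1 - ps) * (pw * bw) + (1 - ps) * (1 - pw) * as)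
      - ((1 - pw) * (ps * pw * (bs - bw)) + pw * (1 - pw) * ((1 - ps) * pw * (bw - as))
        + pw * ((1 - ps) * (1 - pw) * as)) = pw * (1 - pw) * ps * bw by ring]

theorem stmt15 (ps pw as bw bs : ℝ)
    (hps0 : 0 ≤ ps) (hps1 : ps ≤ 1) (hpw0 : 0 ≤ pw) (hpw1 : pw ≤ 1)
    (has : 0 ≤ as) (habw : as ≤ bw) (hbwbs : bw ≤ bs)
    (μs T1 T2 T3 MAX : ℝ)
    (hμ : μs = ps * bs + (1 - ps) * as)
    (hT1 : T1 = pw * bw + (1 - pw) * μs)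
    (hT2 : T2 = ps * bs + (1 - ps) * (pw * bw))
    (hT3 : T3 = μs)
    (hMAX : MAX = ps * bs + (1 - ps) * (pw * bw) + (1 - ps) * (1 - pw) * as) :
    (4 / 5) * MAX ≤ max (max T1 T2) T3 := by
  have hbw : 0 ≤ bw := has.trans habw
  have hps1' : 0 ≤ 1 - ps := sub_nonneg.2 hps1
  have hpw1' : 0 ≤ 1 - pw := sub_nonneg.2 hpw1
  have hgap₁ : T1 = MAX - ps * pw * (bs - bw) := by rw [hT1, hμ, hMAX]; ring
  have hgap₂ : T2 = MAX - (1 - ps) * (1 - pw) * as := by rw [hT2, hMAX]; ring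
  have hgap₃ : T3 = MAX - (1 - ps) * pw * (bw - as) := by rw [hT3, hμ, hMAX]; ring
  have hMAX0 : 0 ≤ MAX := by
    rw [hMAX]
    linarith [mul_nonneg hps0 (hbw.trans hbwbs), mul_nonneg hps1' (mul_nonneg hpw0 hbw),
      mul_nonneg (mul_nonneg hps1' hpw1') has]
  have hmin := five_mul_min_le_of_weighted_sum_le hpw0 hpw1
    (mul_nonneg (mul_nonneg hps0 hpw0) (sub_nonneg.2 hbwbs))
    (mul_nonneg (mul_nonneg hps1' hpw1') has) (mul_nonneg (mul_nonneg hps1' hpw0) (sub_nonneg.2 habw))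
    hMAX0 (hMAX ▸ weighted_gaps_le ps pw as bw bs hps0 hpw0 hpw1 hbw)
  rw [hgap₁, hgap₂, hgap₃, max_sub_sub_left, max_sub_sub_left]
  linarith
end

section
/- If 0 < p* < 1, 0 < p_w ≤ 1, b* ≥ 1, and p_w ≤ (1 − p*·b*)/(1 − p*) with p*·b* < 1, then (1−p_w)·p*·b* + p_w ≥ 3·p*·p_w·(b* − 1); equivalently g ≥ 3f where g = (1−p_w)p*b* + p_w and f = p*p_w(b*−1). -/
/-!
Put `x = p* · (b* - 1)`. The constraint on `p_w` says `x ≤ (1 - p_w)(1 - p*)`, and the claim is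
`(4 p_w - 1) x ≤ (1 - p_w) p* + p_w`. For `p_w ≤ 1/4` the left side is nonpositive; otherwise
the constraint bounds it by `(4 p_w - 1)(1 - p_w)(1 - p*)`, and the gap to the right side is
`(1 - p*)(2 p_w - 1)^2 + p* ≥ 0`.
-/

lemma four_mul_sub_one_mul_le {p q x : ℝ} (hp0 : 0 ≤ p) (hp1 : p ≤ 1) (hq : 0 ≤ q)
    (hx0 : 0 ≤ x) (hx : x ≤ (1 - q) * (1 - p)) :
    (4 * q - 1) * x ≤ (1 - q) * p + q := by
  rcases le_or_gt (4 * q - 1) 0 with hq4 | hq4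
  · nlinarith [mul_nonpos_of_nonpos_of_nonneg hq4 hx0]
  · calc (4 * q - 1) * x ≤ (4 * q - 1) * ((1 - q) * (1 - p)) := by gcongr
      _ ≤ (1 - q) * p + q := by nlinarith [mul_nonneg (sub_nonneg.2 hp1) (sq_nonneg (2 * q - 1))]

lemma mul_sub_one_le_of_le_div {p q b : ℝ} (hp : p < 1) (hq : q ≤ (1 - p * b) / (1 - p)) :
    p * (b - 1) ≤ (1 - q) * (1 - p) := by
  have h : q * (1 - p) ≤ 1 - p * b := (le_div_iff₀ (sub_pos.2 hp)).1 hq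
  linarith

theorem stmt18_general (ps pw bs : ℝ)
    (hps0 : 0 < ps) (hps1 : ps < 1) (hpw0 : 0 < pw)
    (hbs : 1 ≤ bs)
    (hpw : pw ≤ (1 - ps * bs) / (1 - ps)) :
    3 * (ps * pw * (bs - 1)) ≤ (1 - pw) * ps * bs + pw := by
  have hx0 : 0 ≤ ps * (bs - 1) := mul_nonneg hps0.le (sub_nonneg.2 hbs)
  have key := four_mul_sub_one_mul_le hps0.le hps1.le hpw0.le hx0
    (mul_sub_one_le_of_le_div hps1 hpw)
  linarith

theorem stmt18 (ps pw bs : ℝ)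
    (hps0 : 0 < ps) (hps1 : ps < 1) (hpw0 : 0 < pw) (hpw1 : pw ≤ 1)
    (hbs : 1 ≤ bs) (hpsbs : ps * bs < 1)
    (hpw : pw ≤ (1 - ps * bs) / (1 - ps)) :
    3 * (ps * pw * (bs - 1)) ≤ (1 - pw) * ps * bs + pw :=
  stmt18_general ps pw bs hps0 hps1 hpw0 hbs hpw
end

section
/- If 0 ≤ p* < 1, 0 < p_w < 1, 0 ≤ a* ≤ p_w, and b* ≥ (1−p*)(1−p_w)/p* + 1 with p* > 0, then (1−p_w)·p*·b* + p_w ≥ 3·(1−p*)(1−p_w)·a*; equivalently g ≥ 3h where g = (1−p_w)p*b* + p_w and h = (1−p*)(1−p_w)a*. -/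
/-! With `q = 1 - p*` and `r = 1 - p_w`, the bound on `b*` gives
`g ≥ r (q r + p*) + p_w = 1 - q r p_w`, while `h ≤ q r p_w` because `a* ≤ p_w`.
So it suffices that `4 q r p_w ≤ 1`, which holds since `q ≤ 1` and `p_w (1 - p_w) ≤ 1/4`. -/

lemma four_mul_mul_one_sub_le_one (x : ℝ) : 4 * (x * (1 - x)) ≤ 1 := by
  nlinarith [sq_nonneg (2 * x - 1)]

lemma four_mul_mul_mul_one_sub_le_one {q : ℝ} (hq0 : 0 ≤ q) (hq1 : q ≤ 1) (x : ℝ) :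
    4 * (q * (x * (1 - x))) ≤ 1 :=
  calc 4 * (q * (x * (1 - x))) = q * (4 * (x * (1 - x))) := by ring
    _ ≤ q := mul_le_of_le_one_right hq0 (four_mul_mul_one_sub_le_one x)
    _ ≤ 1 := hq1

theorem stmt19_general (ps pw as bs : ℝ)
    (hps0 : 0 < ps) (hps1 : ps < 1) (hpw1 : pw < 1)
    (has : as ≤ pw)
    (hbs : (1 - ps) * (1 - pw) / ps + 1 ≤ bs) :
    3 * ((1 - ps) * (1 - pw) * as) ≤ (1 - pw) * ps * bs + pw := by
  have hq0 : 0 ≤ 1 - ps := sub_nonneg.2 hps1.le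
  have hr0 : 0 ≤ 1 - pw := sub_nonneg.2 hpw1.le
  have hb : (1 - ps) * (1 - pw) + ps ≤ ps * bs := by
    rwa [div_add' _ _ _ hps0.ne', div_le_iff₀ hps0, one_mul, mul_comm bs] at hbs
  have hquarter := four_mul_mul_mul_one_sub_le_one hq0 (by linarith) pw
  calc 3 * ((1 - ps) * (1 - pw) * as) ≤ 3 * ((1 - ps) * (1 - pw) * pw) := by gcongr
    _ ≤ (1 - pw) * ((1 - ps) * (1 - pw) + ps) + pw := by linarith
    _ ≤ (1 - pw) * (ps * bs) + pw := by gcongr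
    _ = (1 - pw) * ps * bs + pw := by ring

theorem stmt19 (ps pw as bs : ℝ)
    (hps0 : 0 < ps) (hps1 : ps < 1) (hpw0 : 0 < pw) (hpw1 : pw < 1)
    (has0 : 0 ≤ as) (has : as ≤ pw)
    (hbs : (1 - ps) * (1 - pw) / ps + 1 ≤ bs) :
    3 * ((1 - ps) * (1 - pw) * as) ≤ (1 - pw) * ps * bs + pw :=
  stmt19_general ps pw as bs hps0 hps1 hpw1 has hbs
end
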